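/- arXiv:2410.08653 — 3 statements merged into one kernel-verified Lean document; each statement's English description precedes it below -/
import Mathlib

section
/- Let n ≥ 1, 1 ≤ k ≤ n, let B ∈ ℝ^{n×k} satisfy BᵀB = I_k, let B^⊥ ∈ ℝ^{(n−k)×n} have full rank n−k and satisfy B^⊥B = 0, and set 𝐁 := [B^⊥; Bᵀ] (an invertible n×n matrix). Let H : ℝⁿ × ℝⁿ → ℝ be differentiable, let τ : ℝ → ℝ^k be a function, and let q, p : ℝ → ℝⁿ be differentiable curves satisfying Hamilton's equations with input: q̇(t) = ∇_p H(q(t),p(t)) and ṗ(t) = −∇_q H(q(t),p(t)) + B τ(t) for all t. Define H̃ : ℝⁿ × ℝⁿ → ℝ by H̃(x,y) := H(𝐁ᵀ x, 𝐁⁻¹ y), and define q̃(t) := (𝐁ᵀ)⁻¹ q(t), p̃(t) := 𝐁 p(t). Then for all t: q̃̇(t) = ∇_y H̃(q̃(t),p̃(t)) and p̃̇(t) = −∇_x H̃(q̃(t),p̃(t)) + [0_{(n−k)×k}; I_k] τ(t). -/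
open Matrix

lemma clm_eq_sum {n : ℕ} (L : (Fin n → ℝ) →L[ℝ] ℝ) (w : Fin n → ℝ) :
    L w = ∑ j, w j * L (Pi.single j 1) := by
  have hw : w = ∑ j, w j • (Pi.single j 1 : Fin n → ℝ) := by
    funext l
    simp [Finset.sum_apply, Pi.single_apply]
  conv_lhs => rw [hw]
  rw [map_sum]
  simp [smul_eq_mul]

lemma deriv_mulVec {n m : ℕ} (M : Matrix (Fin m) (Fin n) ℝ) (q : ℝ → Fin n → ℝ)
    (hq : Differentiable ℝ q) (t : ℝ) :
    deriv (fun t => M.mulVec (q t)) t = M.mulVec (deriv q t) := by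
  have hL := (Matrix.mulVecLin M).toContinuousLinearMap.hasFDerivAt (x := q t)
  have := hL.comp_hasDerivAt t ((hq t).hasDerivAt)
  simpa [Function.comp_def] using this.deriv

lemma fderiv_comp_mulVec {n : ℕ} (g : (Fin n → ℝ) → ℝ) (hg : Differentiable ℝ g)
    (M : Matrix (Fin n) (Fin n) ℝ) (p v : Fin n → ℝ) :
    fderiv ℝ (fun y => g (M.mulVec y)) p v = fderiv ℝ g (M.mulVec p) (M.mulVec v) := by
  have hL := (Matrix.mulVecLin M).toContinuousLinearMap.hasFDerivAt (x := p)
  have h := ((hg (M.mulVec p)).hasFDerivAt.comp p (by simpa using hL)).fderiv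
  have : fderiv ℝ (fun y => g (M.mulVec y)) p =
      (fderiv ℝ g (M.mulVec p)).comp (Matrix.mulVecLin M).toContinuousLinearMap := by
    rw [← h]; rfl
  rw [this]; simp

lemma mulVec_single' {n m : ℕ} (M : Matrix (Fin m) (Fin n) ℝ) (i : Fin n) :
    M.mulVec (Pi.single i 1) = fun l => M l i := by
  funext l
  simp [Matrix.mulVec_single]

lemma ker_perp_eq_range (n k : ℕ) (hkn : k ≤ n)
    (B : Matrix (Fin n) (Fin k) ℝ) (hB : Bᵀ * B = 1)
    (Bperp : Matrix (Fin (n - k)) (Fin n) ℝ) (hrank : Bperp.rank = n - k)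
    (hperp : Bperp * B = 0) :
    LinearMap.ker Bperp.mulVecLin = LinearMap.range B.mulVecLin := by
  have hBinj : Function.Injective B.mulVecLin := by
    intro x y hxy
    have : Bᵀ.mulVec (B.mulVec x) = Bᵀ.mulVec (B.mulVec y) := by
      simpa [Matrix.mulVecLin_apply] using congrArg Bᵀ.mulVec hxy
    simpa [Matrix.mulVec_mulVec, hB] using this
  have hrangeB : Module.finrank ℝ (LinearMap.range B.mulVecLin) = k := by
    rw [LinearMap.finrank_range_of_inj hBinj]
    simp
  have hkerdim : Module.finrank ℝ (LinearMap.ker Bperp.mulVecLin) = k := by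
    have h := LinearMap.finrank_range_add_finrank_ker Bperp.mulVecLin
    rw [show Module.finrank ℝ (LinearMap.range Bperp.mulVecLin) = n - k from hrank] at h
    simp only [Module.finrank_pi, Fintype.card_fin] at h
    omega
  have hle : LinearMap.range B.mulVecLin ≤ LinearMap.ker Bperp.mulVecLin := by
    rintro x ⟨y, rfl⟩
    simp [Matrix.mulVecLin_apply, Matrix.mulVec_mulVec, hperp]
  exact (Submodule.eq_of_le_of_finrank_eq hle (by rw [hrangeB, hkerdim])).symm

lemma BB_det_unit (n k : ℕ)
    (B : Matrix (Fin n) (Fin k) ℝ) (hB : Bᵀ * B = 1)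
    (Bperp : Matrix (Fin (n - k)) (Fin n) ℝ)
    (hker : LinearMap.ker Bperp.mulVecLin = LinearMap.range B.mulVecLin)
    (e : Fin (n - k) ⊕ Fin k ≃ Fin n) :
    IsUnit ((Matrix.fromRows Bperp Bᵀ).reindex e (Equiv.refl (Fin n))).det := by
  set A := (Matrix.fromRows Bperp Bᵀ).reindex e (Equiv.refl (Fin n)) with hA
  by_contra hdet
  rw [isUnit_iff_ne_zero, not_not] at hdet
  obtain ⟨v, hv, hA0⟩ := (Matrix.exists_mulVec_eq_zero_iff).mpr hdet
  have hperp0 : Bperp.mulVec v = 0 := by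
    funext i
    have := congrFun hA0 (e (Sum.inl i))
    simpa [hA, Matrix.mulVec, Matrix.reindex_apply, Matrix.submatrix_apply] using this
  have htop0 : Bᵀ.mulVec v = 0 := by
    funext i
    have := congrFun hA0 (e (Sum.inr i))
    simpa [hA, Matrix.mulVec, Matrix.reindex_apply, Matrix.submatrix_apply] using this
  have hv0 : v ∈ LinearMap.ker Bperp.mulVecLin := by
    simpa [LinearMap.mem_ker, Matrix.mulVecLin_apply] using hperp0
  rw [hker] at hv0
  obtain ⟨y, rfl⟩ := hv0
  have : (Bᵀ * B).mulVec y = 0 := by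
    rw [← Matrix.mulVec_mulVec]
    simpa [Matrix.mulVecLin_apply] using htop0
  rw [hB] at this
  simp at this
  exact hv (by simp [this, Matrix.mulVecLin_apply])

/-- Theorem 1: the linear change of coordinates `(q̃,p̃) = ((𝐁ᵀ)⁻¹ q, 𝐁 p)`,
with `𝐁 = [B^⊥; Bᵀ]`, is canonical: the new Hamiltonian is
`H̃(x,y) = H(𝐁ᵀ x, 𝐁⁻¹ y)` and the new input matrix is `[0; I_k]`. -/
theorem stmt2 (n k : ℕ) (hn : 1 ≤ n) (hk : 1 ≤ k) (hkn : k ≤ n)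
    (B : Matrix (Fin n) (Fin k) ℝ) (hB : Bᵀ * B = 1)
    (Bperp : Matrix (Fin (n - k)) (Fin n) ℝ) (hrank : Bperp.rank = n - k)
    (hperp : Bperp * B = 0)
    (H : (Fin n → ℝ) → (Fin n → ℝ) → ℝ)
    (hH : Differentiable ℝ (fun z : (Fin n → ℝ) × (Fin n → ℝ) => H z.1 z.2))
    (τ : ℝ → Fin k → ℝ)
    (q p : ℝ → Fin n → ℝ) (hq : Differentiable ℝ q) (hp : Differentiable ℝ p)
    (ham_q : ∀ t : ℝ, deriv q t =
      fun i => fderiv ℝ (fun y => H (q t) y) (p t) (Pi.single i 1))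
    (ham_p : ∀ t : ℝ, deriv p t =
      (fun i => -fderiv ℝ (fun x => H x (p t)) (q t) (Pi.single i 1))
        + B.mulVec (τ t)) :
    let e := finSumFinEquiv.trans (finCongr (Nat.sub_add_cancel hkn))
    let BB : Matrix (Fin n) (Fin n) ℝ :=
      (Matrix.fromRows Bperp Bᵀ).reindex e (Equiv.refl (Fin n))
    let Bhat : Matrix (Fin n) (Fin k) ℝ :=
      (Matrix.fromRows (0 : Matrix (Fin (n - k)) (Fin k) ℝ)
        (1 : Matrix (Fin k) (Fin k) ℝ)).reindex e (Equiv.refl (Fin k))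
    let Htil : (Fin n → ℝ) → (Fin n → ℝ) → ℝ :=
      fun x y => H (BBᵀ.mulVec x) (BB⁻¹.mulVec y)
    let qtil : ℝ → Fin n → ℝ := fun t => (BBᵀ)⁻¹.mulVec (q t)
    let ptil : ℝ → Fin n → ℝ := fun t => BB.mulVec (p t)
    ∀ t : ℝ,
      (deriv qtil t =
        fun i => fderiv ℝ (fun y => Htil (qtil t) y) (ptil t) (Pi.single i 1)) ∧
      (deriv ptil t =
        (fun i => -fderiv ℝ (fun x => Htil x (ptil t)) (qtil t) (Pi.single i 1))
          + Bhat.mulVec (τ t)) := by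
  intro e BB Bhat Htil qtil ptil t
  have hker := ker_perp_eq_range n k hkn B hB Bperp hrank hperp
  have hdet : IsUnit BB.det := BB_det_unit n k B hB Bperp hker e
  have hdetT : IsUnit BBᵀ.det := by rwa [Matrix.det_transpose]
  have hq_rec : ∀ s : ℝ, BBᵀ.mulVec (qtil s) = q s := by
    intro s
    show BBᵀ.mulVec ((BBᵀ)⁻¹.mulVec (q s)) = q s
    rw [Matrix.mulVec_mulVec, Matrix.mul_nonsing_inv _ hdetT, Matrix.one_mulVec]
  have hp_rec : ∀ s : ℝ, BB⁻¹.mulVec (ptil s) = p s := by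
    intro s
    show BB⁻¹.mulVec (BB.mulVec (p s)) = p s
    rw [Matrix.mulVec_mulVec, Matrix.nonsing_inv_mul _ hdet, Matrix.one_mulVec]
  have hinvT : (BB⁻¹)ᵀ = (BBᵀ)⁻¹ := Matrix.transpose_nonsing_inv BB
  have hmul : BB * B = Bhat := by
    ext i j
    show (BB * B) i j = Bhat i j
    simp only [BB, Bhat, Matrix.mul_apply, Matrix.reindex_apply, Matrix.submatrix_apply,
      Equiv.refl_symm, Equiv.refl_apply]
    rcases h : e.symm i with a | a
    · have := congrFun (congrFun hperp a) j
      simpa [Matrix.mul_apply] using this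
    · have := congrFun (congrFun hB a) j
      simpa [Matrix.mul_apply] using this
  constructor
  · have hgdiff : Differentiable ℝ (fun y => H (q t) y) :=
      hH.comp ((differentiable_const (q t)).prodMk differentiable_id)
    have heq : (fun y => Htil (qtil t) y)
        = (fun y => (fun z => H (q t) z) (BB⁻¹.mulVec y)) := by
      funext y
      show H (BBᵀ.mulVec (qtil t)) (BB⁻¹.mulVec y) = H (q t) (BB⁻¹.mulVec y)
      rw [hq_rec]
    funext i
    rw [heq]
    rw [fderiv_comp_mulVec _ hgdiff, hp_rec, mulVec_single']
    have hd : deriv qtil t = (BBᵀ)⁻¹.mulVec (deriv q t) := deriv_mulVec _ q hq t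
    rw [hd, ham_q t, clm_eq_sum]
    simp [Matrix.mulVec, dotProduct, ← hinvT]
  · have hgdiff : Differentiable ℝ (fun x => H x (p t)) :=
      hH.comp (differentiable_id.prodMk (differentiable_const (p t)))
    have heq : (fun x => Htil x (ptil t))
        = (fun x => (fun z => H z (p t)) (BBᵀ.mulVec x)) := by
      funext x
      show H (BBᵀ.mulVec x) (BB⁻¹.mulVec (ptil t)) = H (BBᵀ.mulVec x) (p t)
      rw [hp_rec]
    funext i
    simp only [Pi.add_apply]
    rw [heq, fderiv_comp_mulVec _ hgdiff, hq_rec, mulVec_single']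
    have hd : deriv ptil t = BB.mulVec (deriv p t) := deriv_mulVec _ p hp t
    rw [hd, ham_p t, Matrix.mulVec_add, Matrix.mulVec_mulVec, hmul]
    simp only [Pi.add_apply]
    congr 1
    rw [clm_eq_sum]
    simp [Matrix.mulVec, dotProduct, mul_neg, Finset.sum_neg_distrib, Matrix.transpose_apply]
end

section
/- Let r₁ < r₂ be reals, η > 0, I₁ > 0, and let f_r, f_θ : ℝ × ℝ × ℝ → ℝ be C² functions that are 2π-periodic in their second argument. Suppose that for all (r, θ) ∈ (r₁ − η, r₂ + η) × ℝ: (a) f_r(r,θ,0) = 0; (b) f_θ(r,θ,0) > 0; (c) writing g := f_r / f_θ, ∂_r g(r,θ,0) = 0; and (d) ∫₀^{2π} ∂_I g(r,θ,I)|_{I=0} dθ > 0. Then there exists I* ∈ (0, I₁] such that for every I ∈ (0, I*] and every differentiable solution (r(t), θ(t)) of ṙ = f_r(r,θ,I), θ̇ = f_θ(r,θ,I) with r(0) ∈ [r₁, r₂], there exists t̄ ≥ 0 such that r(t) ∈ (r₁ − η, r₂ + η) for all t ∈ [0, t̄], r(t̄) = r₂, the set of times t ∈ [0, t̄] with θ(t)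 ∈ 2πℤ is discrete, and the values r(t) at these times, ordered by increasing t, form a strictly increasing sequence. Symmetrically, for every I ∈ [−I*, 0), there exists t̄ ≥ 0 with r(t̄) = r₁ and the values r(t) at the times t ∈ [0,t̄] with θ(t) ∈ 2πℤ form a strictly decreasing sequence. -/
open Real Set intervalIntegral

section helpers

variable {X : Type*} [NormedAddCommGroup X] [NormedSpace ℝ X]

/-- fderiv of a periodic function is periodic. -/
lemma fderiv_periodic_triple (φ : ℝ × ℝ × ℝ → X) (hφ : Differentiable ℝ φ)
    (e : ℝ × ℝ × ℝ) (hp : ∀ z, φ (z + e) = φ z) (z : ℝ × ℝ × ℝ) :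
    fderiv ℝ φ (z + e) = fderiv ℝ φ z := by
  have h1 : HasFDerivAt φ (fderiv ℝ φ (z + e)) (z + e) := (hφ (z + e)).hasFDerivAt
  have h2 : HasFDerivAt (fun w => φ (w + e)) (fderiv ℝ φ (z + e)) z := by
    have := h1.comp z ((hasFDerivAt_id z).add_const e)
    simp at this; exact this
  have h3 : HasFDerivAt φ (fderiv ℝ φ (z + e)) z := by
    have heq : (fun w => φ (w + e)) = φ := funext hp
    rwa [heq] at h2
  exact h3.fderiv.symm

/-- slice derivative in the third coordinate -/
lemma slice_I (φ : ℝ × ℝ × ℝ → X) (hφ : Differentiable ℝ φ) (a b c : ℝ) :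
    HasDerivAt (fun s : ℝ => φ (a, b, s)) (fderiv ℝ φ (a, b, c) (0, 0, 1)) c := by
  have hc : HasDerivAt (fun s : ℝ => ((a, b, s) : ℝ × ℝ × ℝ)) ((0 : ℝ), (0 : ℝ), (1 : ℝ)) c :=
    (hasDerivAt_const c a).prodMk ((hasDerivAt_const c b).prodMk (hasDerivAt_id c))
  exact (hφ _).hasFDerivAt.comp_hasDerivAt c hc

/-- slice derivative in the first coordinate -/
lemma slice_r (φ : ℝ × ℝ × ℝ → X) (hφ : Differentiable ℝ φ) (a b c : ℝ) :
    HasDerivAt (fun s : ℝ => φ (s, b, c)) (fderiv ℝ φ (a, b, c) (1, 0, 0)) a := by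
  have hc : HasDerivAt (fun s : ℝ => ((s, b, c) : ℝ × ℝ × ℝ)) ((1 : ℝ), (0 : ℝ), (0 : ℝ)) a :=
    (hasDerivAt_id a).prodMk ((hasDerivAt_const a b).prodMk (hasDerivAt_const a c))
  exact (hφ _).hasFDerivAt.comp_hasDerivAt a hc

lemma norm_001 : ‖((0 : ℝ), (0 : ℝ), (1 : ℝ))‖ = 1 := by
  simp [Prod.norm_def]

lemma norm_100 : ‖((1 : ℝ), (0 : ℝ), (0 : ℝ))‖ = 1 := by
  simp [Prod.norm_def]

/-- reduce an angle to [0, 2π] modulo 2π -/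
lemma angle_reduce (θ : ℝ) : ∃ k : ℤ, θ - 2 * π * k ∈ Icc (0 : ℝ) (2 * π) := by
  refine ⟨⌊θ / (2 * π)⌋, ?_⟩
  have h2π : (0 : ℝ) < 2 * π := by positivity
  have hne : (2 * π) ≠ 0 := ne_of_gt h2π
  constructor
  · have h1 := mul_le_mul_of_nonneg_right (Int.floor_le (θ / (2 * π))) h2π.le
    rw [div_mul_cancel₀ _ hne] at h1
    linarith
  · have h1 := mul_lt_mul_of_pos_right (Int.lt_floor_add_one (θ / (2 * π))) h2π
    rw [div_mul_cancel₀ _ hne] at h1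
    nlinarith

lemma periodic_zsmul {X : Type*} (ψ : ℝ × ℝ × ℝ → X) (e : ℝ × ℝ × ℝ)
    (hp : ∀ z, ψ (z + e) = ψ z) : ∀ (k : ℤ) (z), ψ (z + k • e) = ψ z := by
  intro k
  induction k using Int.induction_on with
  | zero => simp
  | succ n ih =>
    intro z
    have h1 : z + ((n : ℤ) + 1) • e = (z + e) + (n : ℤ) • e := by
      rw [add_smul, one_smul]; abel
    rw [h1, ih, hp]
  | pred n ih =>
    intro z
    have h1 : z + (-(n : ℤ) - 1) • e = (z - e) + (-(n : ℤ)) • e := by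
      rw [sub_smul, one_smul]; abel
    have h2 : ψ (z - e) = ψ z := by
      have := hp (z - e); rw [sub_add_cancel] at this; exact this.symm ▸ rfl
    rw [h1, ih, h2]

/-- uniform bound on the strip using θ-periodicity -/
lemma bound_on_strip {X : Type*} [NormedAddCommGroup X] (ψ : ℝ × ℝ × ℝ → X)
    (hcont : Continuous ψ)
    (hp : ∀ z, ψ (z + ((0 : ℝ), 2 * π, (0 : ℝ))) = ψ z) (a' b' : ℝ) (hab : a' ≤ b') :
    ∃ M : ℝ, ∀ p ∈ Icc a' b', ∀ q s : ℝ, |s| ≤ 1 → ‖ψ (p, q, s)‖ ≤ M := by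
  have hQ : IsCompact ((Icc a' b') ×ˢ (Icc 0 (2 * π)) ×ˢ (Icc (-1 : ℝ) 1)) :=
    (isCompact_Icc).prod ((isCompact_Icc).prod isCompact_Icc)
  have hne : ((Icc a' b') ×ˢ (Icc 0 (2 * π)) ×ˢ (Icc (-1 : ℝ) 1)).Nonempty := by
    refine ⟨(a', 0, 0), ?_⟩
    refine ⟨⟨le_refl _, hab⟩, ⟨le_refl _, by positivity⟩, ⟨by norm_num, by norm_num⟩⟩
  obtain ⟨z₀, hz₀, hmax⟩ := hQ.exists_isMaxOn hne (hcont.norm.continuousOn)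
  refine ⟨‖ψ z₀‖, ?_⟩
  intro p hpq q s hs
  obtain ⟨k, hk⟩ := angle_reduce q
  have hper' := periodic_zsmul ψ _ hp k (p, q - 2 * π * k, s)
  have hz : ((p, q - 2 * π * k, s) : ℝ × ℝ × ℝ) + k • ((0 : ℝ), 2 * π, (0 : ℝ))
      = (p, q, s) := by
    simp only [Prod.smul_mk, Prod.mk_add_mk, smul_zero, add_zero, zsmul_eq_mul]
    refine Prod.ext rfl (Prod.ext ?_ rfl)
    simp only []
    ring
  rw [hz] at hper'
  calc ‖ψ (p, q, s)‖ = ‖ψ (p, q - 2 * π * k, s)‖ := by rw [hper']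
    _ ≤ ‖ψ z₀‖ := hmax ⟨hpq, hk, abs_le.1 hs⟩

end helpers

set_option maxHeartbeats 2000000 in
theorem stmt9_pos (r₁ r₂ η I₁ : ℝ) (hr : r₁ < r₂) (hη : 0 < η) (hI₁ : 0 < I₁)
    (fr fθ : ℝ → ℝ → ℝ → ℝ)
    (hfr : ContDiff ℝ 2 (fun z : ℝ × ℝ × ℝ => fr z.1 z.2.1 z.2.2))
    (hfθ : ContDiff ℝ 2 (fun z : ℝ × ℝ × ℝ => fθ z.1 z.2.1 z.2.2))
    (hper_r : ∀ r θ I : ℝ, fr r (θ + 2 * Real.pi) I = fr r θ I)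
    (hper_θ : ∀ r θ I : ℝ, fθ r (θ + 2 * Real.pi) I = fθ r θ I)
    (ha : ∀ r ∈ Set.Ioo (r₁ - η) (r₂ + η), ∀ θ : ℝ, fr r θ 0 = 0)
    (hb : ∀ r ∈ Set.Ioo (r₁ - η) (r₂ + η), ∀ θ : ℝ, 0 < fθ r θ 0)
    (hd : ∀ r ∈ Set.Ioo (r₁ - η) (r₂ + η),
      0 < ∫ θ in (0 : ℝ)..(2 * Real.pi),
        deriv (fun I => fr r θ I / fθ r θ I) 0) :
    ∃ Istar : ℝ, 0 < Istar ∧ Istar ≤ I₁ ∧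
      (∀ I : ℝ, 0 < I → I ≤ Istar →
        ∀ r θ : ℝ → ℝ,
          (∀ t : ℝ, 0 ≤ t → HasDerivAt r (fr (r t) (θ t) I) t) →
          (∀ t : ℝ, 0 ≤ t → HasDerivAt θ (fθ (r t) (θ t) I) t) →
          r 0 ∈ Set.Icc r₁ r₂ →
          ∃ tbar : ℝ, 0 ≤ tbar ∧
            (∀ t ∈ Set.Icc 0 tbar, r t ∈ Set.Ioo (r₁ - η) (r₂ + η)) ∧
            r tbar = r₂ ∧
            (let P : Set ℝ :=
              {t | t ∈ Set.Icc 0 tbar ∧ ∃ k : ℤ, θ t = 2 * Real.pi * k}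
             (∀ t ∈ P, ∃ δ > 0, ∀ s ∈ P, |s - t| < δ → s = t) ∧
             StrictMonoOn r P)) := by
  have hπ : (0 : ℝ) < π := Real.pi_pos
  set a' : ℝ := r₁ - η / 2 with ha'_def
  set b' : ℝ := r₂ with hb'_def
  have hab' : a' ≤ b' := by simp only [ha'_def, hb'_def]; linarith
  have hsub : Icc a' b' ⊆ Set.Ioo (r₁ - η) (r₂ + η) := by
    intro x hx
    exact ⟨by simp only [ha'_def] at hx; linarith [hx.1], by
      simp only [hb'_def] at hx; linarith [hx.2]⟩
  set F : ℝ × ℝ × ℝ → ℝ := fun z => fr z.1 z.2.1 z.2.2 with hF_def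
  set Fϑ : ℝ × ℝ × ℝ → ℝ := fun z => fθ z.1 z.2.1 z.2.2 with hFϑ_def
  have hFdiff : Differentiable ℝ F := hfr.differentiable (by norm_num)
  have hFϑdiff : Differentiable ℝ Fϑ := hfθ.differentiable (by norm_num)
  set H : ℝ × ℝ × ℝ → (ℝ × ℝ × ℝ →L[ℝ] ℝ) := fun z => fderiv ℝ F z with hH_def
  have hHc1 : ContDiff ℝ 1 H := hfr.fderiv_right (by norm_num)
  have hHdiff : Differentiable ℝ H := hHc1.differentiable (by norm_num)
  set e : ℝ × ℝ × ℝ := ((0 : ℝ), 2 * π, (0 : ℝ)) with he_def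
  have hadd : ∀ z : ℝ × ℝ × ℝ, z + e = (z.1, z.2.1 + 2 * π, z.2.2) := by
    intro z
    simp only [he_def, Prod.ext_iff, Prod.fst_add, Prod.snd_add, add_zero]
    exact ⟨trivial, trivial, trivial⟩
  have hFper : ∀ z, F (z + e) = F z := by
    intro z; rw [hadd z]; exact hper_r z.1 z.2.1 z.2.2
  have hFϑper : ∀ z, Fϑ (z + e) = Fϑ z := by
    intro z; rw [hadd z]; exact hper_θ z.1 z.2.1 z.2.2
  have hHper : ∀ z, H (z + e) = H z := fderiv_periodic_triple F hFdiff e hFper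
  have hH2per : ∀ z, fderiv ℝ H (z + e) = fderiv ℝ H z :=
    fderiv_periodic_triple H hHdiff e hHper
  have hFϑ1per : ∀ z, fderiv ℝ Fϑ (z + e) = fderiv ℝ Fϑ z :=
    fderiv_periodic_triple Fϑ hFϑdiff e hFϑper
  -- uniform bounds
  obtain ⟨M₁, hM₁⟩ := bound_on_strip H hHc1.continuous hHper a' b' hab'
  obtain ⟨M₂, hM₂⟩ := bound_on_strip (fderiv ℝ H) (hHc1.continuous_fderiv (by norm_num))
    hH2per a' b' hab'
  obtain ⟨M₃, hM₃⟩ := bound_on_strip Fϑ hfθ.continuous hFϑper a' b' hab'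
  obtain ⟨M₄, hM₄⟩ := bound_on_strip (fderiv ℝ Fϑ) (hfθ.continuous_fderiv (by norm_num))
    hFϑ1per a' b' hab'
  set M : ℝ := max 1 (max (max M₁ M₂) (max M₃ M₄)) with hM_def
  have hM1 : (1 : ℝ) ≤ M := le_max_left _ _
  have hM0 : (0 : ℝ) < M := lt_of_lt_of_le one_pos hM1
  have bH : ∀ p ∈ Icc a' b', ∀ q s : ℝ, |s| ≤ 1 → ‖H (p, q, s)‖ ≤ M :=
    fun p hp q s hs => (hM₁ p hp q s hs).trans
      (le_trans (le_max_left _ _) (le_trans (le_max_left _ _) (le_max_right _ _)))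
  have bH2 : ∀ p ∈ Icc a' b', ∀ q s : ℝ, |s| ≤ 1 → ‖fderiv ℝ H (p, q, s)‖ ≤ M :=
    fun p hp q s hs => (hM₂ p hp q s hs).trans
      (le_trans (le_max_right _ _) (le_trans (le_max_left _ _) (le_max_right _ _)))
  have bFϑ : ∀ p ∈ Icc a' b', ∀ q s : ℝ, |s| ≤ 1 → |fθ p q s| ≤ M := by
    intro p hp q s hs
    have := hM₃ p hp q s hs
    rw [Real.norm_eq_abs] at this
    exact this.trans (le_trans (le_max_left _ _)
      (le_trans (le_max_right _ _) (le_max_right _ _)))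
  have bFϑ1 : ∀ p ∈ Icc a' b', ∀ q s : ℝ, |s| ≤ 1 → ‖fderiv ℝ Fϑ (p, q, s)‖ ≤ M :=
    fun p hp q s hs => (hM₄ p hp q s hs).trans
      (le_trans (le_max_right _ _) (le_trans (le_max_right _ _) (le_max_right _ _)))
  -- the ∂_I derivative of fr
  set G : ℝ → ℝ → ℝ → ℝ := fun p q s => H (p, q, s) ((0 : ℝ), (0 : ℝ), (1 : ℝ))
    with hG_def
  have hGd : ∀ p q s : ℝ, HasDerivAt (fun w => fr p q w) (G p q s) s :=
    fun p q s => slice_I F hFdiff p q s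
  have hGϑd : ∀ p q s : ℝ,
      HasDerivAt (fun w => fθ p q w) (fderiv ℝ Fϑ (p, q, s) ((0:ℝ), (0:ℝ), (1:ℝ))) s :=
    fun p q s => slice_I Fϑ hFϑdiff p q s
  have hGper : ∀ p q s : ℝ, G p (q + 2 * π) s = G p q s := by
    intro p q s
    have h1 := hHper (p, q, s)
    rw [hadd (p, q, s)] at h1
    simp only [hG_def]
    rw [h1]
  have bG : ∀ p ∈ Icc a' b', ∀ q s : ℝ, |s| ≤ 1 → |G p q s| ≤ M := by
    intro p hp q s hs
    have h1 := (H (p, q, s)).le_opNorm ((0:ℝ), (0:ℝ), (1:ℝ))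
    rw [norm_001, mul_one] at h1
    calc |G p q s| = ‖H (p, q, s) ((0:ℝ), (0:ℝ), (1:ℝ))‖ := (Real.norm_eq_abs _).symm
      _ ≤ ‖H (p, q, s)‖ := h1
      _ ≤ M := bH p hp q s hs
  -- Lipschitz estimates via 1-D mean value theorem on slices
  have clm_diff_bound : ∀ (T₁ T₂ : ℝ × ℝ × ℝ →L[ℝ] ℝ) (v : ℝ × ℝ × ℝ), ‖v‖ = 1 →
      |T₁ v - T₂ v| ≤ ‖T₁ - T₂‖ := by
    intro T₁ T₂ v hv
    have h1 := (T₁ - T₂).le_opNorm v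
    rw [hv, mul_one] at h1
    rw [← Real.norm_eq_abs]
    simpa using h1
  have lipGI : ∀ p ∈ Icc a' b', ∀ q : ℝ, ∀ s : ℝ, |s| ≤ 1 →
      |G p q s - G p q 0| ≤ M * |s| := by
    intro p hp q s hs
    have hmvt : ‖H (p, q, s) - H (p, q, 0)‖ ≤ M * ‖s - 0‖ := by
      refine Convex.norm_image_sub_le_of_norm_hasDerivWithin_le
        (f := fun w => H (p, q, w))
        (f' := fun w => fderiv ℝ H (p, q, w) ((0:ℝ), (0:ℝ), (1:ℝ)))
        (fun x hx => (slice_I H hHdiff p q x).hasDerivWithinAt) ?_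
        (convex_Icc (-1 : ℝ) 1) ⟨by norm_num, by norm_num⟩ (abs_le.1 hs)
      intro x hx
      have h1 := (fderiv ℝ H (p, q, x)).le_opNorm ((0:ℝ), (0:ℝ), (1:ℝ))
      rw [norm_001, mul_one] at h1
      exact h1.trans (bH2 p hp q x (abs_le.2 hx))
    rw [sub_zero, Real.norm_eq_abs] at hmvt
    calc |G p q s - G p q 0| ≤ ‖H (p, q, s) - H (p, q, 0)‖ := by
          have := clm_diff_bound (H (p, q, s)) (H (p, q, 0)) _ norm_001
          simpa only [ContinuousLinearMap.sub_apply] using this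
      _ ≤ M * |s| := hmvt
  have lipGr : ∀ p ∈ Icc a' b', ∀ p' ∈ Icc a' b', ∀ q : ℝ,
      |G p q 0 - G p' q 0| ≤ M * |p - p'| := by
    intro p hp p' hp' q
    have hmvt : ‖H (p, q, 0) - H (p', q, 0)‖ ≤ M * ‖p - p'‖ := by
      refine Convex.norm_image_sub_le_of_norm_hasDerivWithin_le
        (f := fun w => H (w, q, 0))
        (f' := fun w => fderiv ℝ H (w, q, 0) ((1:ℝ), (0:ℝ), (0:ℝ)))
        (fun x hx => (slice_r H hHdiff x q 0).hasDerivWithinAt) ?_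
        (convex_Icc a' b') hp' hp
      intro x hx
      have h1 := (fderiv ℝ H (x, q, 0)).le_opNorm ((1:ℝ), (0:ℝ), (0:ℝ))
      rw [norm_100, mul_one] at h1
      exact h1.trans (bH2 x hx q 0 (by norm_num))
    rw [Real.norm_eq_abs] at hmvt
    calc |G p q 0 - G p' q 0| ≤ ‖H (p, q, 0) - H (p', q, 0)‖ := by
          have := clm_diff_bound (H (p, q, 0)) (H (p', q, 0)) _ norm_001
          simpa only [ContinuousLinearMap.sub_apply] using this
      _ ≤ M * |p - p'| := hmvt
  have lipfθI : ∀ p ∈ Icc a' b', ∀ q : ℝ, ∀ s : ℝ, |s| ≤ 1 →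
      |fθ p q s - fθ p q 0| ≤ M * |s| := by
    intro p hp q s hs
    have hmvt : ‖fθ p q s - fθ p q 0‖ ≤ M * ‖s - 0‖ := by
      refine Convex.norm_image_sub_le_of_norm_hasDerivWithin_le
        (f := fun w => fθ p q w)
        (f' := fun w => fderiv ℝ Fϑ (p, q, w) ((0:ℝ), (0:ℝ), (1:ℝ)))
        (fun x hx => (hGϑd p q x).hasDerivWithinAt) ?_
        (convex_Icc (-1 : ℝ) 1) ⟨by norm_num, by norm_num⟩ (abs_le.1 hs)
      intro x hx
      have h1 := (fderiv ℝ Fϑ (p, q, x)).le_opNorm ((0:ℝ), (0:ℝ), (1:ℝ))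
      rw [norm_001, mul_one] at h1
      rw [Real.norm_eq_abs] at h1 ⊢
      exact h1.trans (bFϑ1 p hp q x (abs_le.2 hx))
    rw [sub_zero, Real.norm_eq_abs, Real.norm_eq_abs] at hmvt
    exact hmvt
  have lipfθr : ∀ p ∈ Icc a' b', ∀ p' ∈ Icc a' b', ∀ q : ℝ,
      |fθ p q 0 - fθ p' q 0| ≤ M * |p - p'| := by
    intro p hp p' hp' q
    have hmvt : ‖fθ p q 0 - fθ p' q 0‖ ≤ M * ‖p - p'‖ := by
      refine Convex.norm_image_sub_le_of_norm_hasDerivWithin_le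
        (f := fun w => fθ w q 0)
        (f' := fun w => fderiv ℝ Fϑ (w, q, 0) ((1:ℝ), (0:ℝ), (0:ℝ)))
        (fun x hx => (slice_r Fϑ hFϑdiff x q 0).hasDerivWithinAt) ?_
        (convex_Icc a' b') hp' hp
      intro x hx
      have h1 := (fderiv ℝ Fϑ (x, q, 0)).le_opNorm ((1:ℝ), (0:ℝ), (0:ℝ))
      rw [norm_100, mul_one] at h1
      rw [Real.norm_eq_abs] at h1 ⊢
      exact h1.trans (bFϑ1 x hx q 0 (by norm_num))
    rw [Real.norm_eq_abs, Real.norm_eq_abs] at hmvt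
    exact hmvt
  have taylor : ∀ p ∈ Icc a' b', ∀ q : ℝ, ∀ s : ℝ, |s| ≤ 1 →
      |fr p q s - s * G p q 0| ≤ M * s ^ 2 := by
    intro p hp q s hs
    have hφd : ∀ x : ℝ, HasDerivAt (fun w => fr p q w - w * G p q 0)
        (G p q x - G p q 0) x :=
      fun x => (hGd p q x).sub (hasDerivAt_mul_const (G p q 0))
    have hmvt : ‖(fr p q s - s * G p q 0) - (fr p q 0 - 0 * G p q 0)‖ ≤ (M * |s|) * ‖s - 0‖ := by
      refine Convex.norm_image_sub_le_of_norm_hasDerivWithin_le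
        (f := fun w => fr p q w - w * G p q 0)
        (f' := fun w => G p q w - G p q 0)
        (fun x hx => (hφd x).hasDerivWithinAt) ?_
        (convex_uIcc 0 s) (left_mem_uIcc) (right_mem_uIcc)
      intro x hx
      have hxs : |x| ≤ |s| := by
        rw [uIcc_eq_union] at hx
        rcases hx with hx | hx
        · rw [abs_le]
          constructor
          · linarith [hx.1, neg_abs_le s, abs_nonneg s]
          · linarith [hx.2, le_abs_self s]
        · rw [abs_le]
          constructor
          · linarith [hx.1, neg_abs_le s]
          · linarith [hx.2, le_abs_self s, abs_nonneg s]
      rw [Real.norm_eq_abs]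
      calc |G p q x - G p q 0| ≤ M * |x| := lipGI p hp q x (hxs.trans hs)
        _ ≤ M * |s| := by nlinarith
    rw [ha p (hsub hp) q, zero_mul, sub_zero, sub_zero, sub_zero, Real.norm_eq_abs,
      Real.norm_eq_abs] at hmvt
    calc |fr p q s - s * G p q 0| ≤ (M * |s|) * |s| := hmvt
      _ = M * s ^ 2 := by rw [mul_assoc, abs_mul_abs_self, sq]
  have bfr : ∀ p ∈ Icc a' b', ∀ q : ℝ, ∀ s : ℝ, |s| ≤ 1 →
      |fr p q s| ≤ 2 * M * |s| := by
    intro p hp q s hs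
    have h1 := taylor p hp q s hs
    have h2 := bG p hp q 0 (by norm_num)
    have h3 : |s * G p q 0| ≤ |s| * M := by
      rw [abs_mul]
      exact mul_le_mul_of_nonneg_left h2 (abs_nonneg s)
    have h4 : s ^ 2 ≤ |s| := by
      rw [← sq_abs, sq]
      nlinarith [abs_nonneg s]
    calc |fr p q s| ≤ |fr p q s - s * G p q 0| + |s * G p q 0| := by
          have := abs_sub_abs_le_abs_sub (fr p q s) (s * G p q 0)
          have h5 := abs_add_le (fr p q s - s * G p q 0) (s * G p q 0)
          simpa using h5
      _ ≤ M * s ^ 2 + |s| * M := add_le_add h1 h3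
      _ ≤ M * |s| + |s| * M := by nlinarith
      _ = 2 * M * |s| := by ring
  -- lower bound m for fθ at I = 0
  have hQ₁ : IsCompact ((Icc a' b') ×ˢ (Icc (0 : ℝ) (2 * π))) :=
    isCompact_Icc.prod isCompact_Icc
  have hQ₁ne : ((Icc a' b') ×ˢ (Icc (0 : ℝ) (2 * π))).Nonempty :=
    ⟨(a', 0), ⟨le_refl _, hab'⟩, le_refl _, by positivity⟩
  have hfθ0cont : Continuous (fun pq : ℝ × ℝ => fθ pq.1 pq.2 0) :=
    hfθ.continuous.comp (continuous_fst.prodMk (continuous_snd.prodMk continuous_const))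
  obtain ⟨pm, hpm, hpmmin⟩ := hQ₁.exists_isMinOn hQ₁ne hfθ0cont.continuousOn
  set m : ℝ := fθ pm.1 pm.2 0 with hm_def
  have hm0 : 0 < m := hb pm.1 (hsub hpm.1) pm.2
  have hmle : ∀ p ∈ Icc a' b', ∀ q : ℝ, m ≤ fθ p q 0 := by
    intro p hp q
    obtain ⟨k, hk⟩ := angle_reduce q
    have hper : Function.Periodic (fun q' => fθ p q' 0) (2 * π) := fun x => hper_θ p x 0
    have h1 := (hper.int_mul k) (q - 2 * π * k)
    have h2 : q - 2 * π * k + (k : ℝ) * (2 * π) = q := by ring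
    rw [h2] at h1
    calc m ≤ fθ p (q - 2 * π * k) 0 := hpmmin (Set.mk_mem_prod hp hk)
      _ = fθ p q 0 := h1.symm
  have hmM : m ≤ M := le_trans (le_abs_self _) (bFϑ pm.1 hpm.1 pm.2 0 (by norm_num))
  have hfθlow : ∀ p ∈ Icc a' b', ∀ q : ℝ, ∀ s : ℝ, |s| ≤ 1 → |s| ≤ m / (2 * M) →
      m / 2 ≤ fθ p q s := by
    intro p hp q s hs1 hs2
    have h1 := lipfθI p hp q s hs1
    have h2 := hmle p hp q
    have h3 : M * |s| ≤ m / 2 := by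
      have := mul_le_mul_of_nonneg_left hs2 hM0.le
      calc M * |s| ≤ M * (m / (2 * M)) := this
        _ = m / 2 := by field_simp
    have h4 := abs_le.1 h1
    linarith [h4.1]
  -- continuity of slices
  have hGcontθ : ∀ p : ℝ, Continuous (fun q => G p q 0) := by
    intro p
    exact (hHc1.continuous.comp
      (continuous_const.prodMk (continuous_id.prodMk continuous_const))).clm_apply
      continuous_const
  have hfθcontθ : ∀ p : ℝ, Continuous (fun q => fθ p q 0) := by
    intro p
    exact hfθ.continuous.comp
      (continuous_const.prodMk (continuous_id.prodMk continuous_const))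
  have hIntcont : ∀ p ∈ Icc a' b', Continuous (fun q => G p q 0 / fθ p q 0) := by
    intro p hp
    exact (hGcontθ p).div (hfθcontθ p)
      (fun q => ne_of_gt (lt_of_lt_of_le hm0 (hmle p hp q)))
  -- the averaged drift A
  set A : ℝ → ℝ := fun p => ∫ q in (0 : ℝ)..(2 * π), G p q 0 / fθ p q 0 with hA_def
  have hApos : ∀ p ∈ Icc a' b', 0 < A p := by
    intro p hp
    have h0 := hd p (hsub hp)
    have hcongr : ∀ q ∈ uIcc (0 : ℝ) (2 * π),
        deriv (fun w => fr p q w / fθ p q w) 0 = G p q 0 / fθ p q 0 := by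
      intro q _
      have hne : fθ p q 0 ≠ 0 := ne_of_gt (lt_of_lt_of_le hm0 (hmle p hp q))
      have hquot := ((hGd p q 0).div (hGϑd p q 0) hne).deriv
      rw [show (fun w => fr p q w / fθ p q w) = ((fun w => fr p q w) / fun w => fθ p q w) from rfl,
        hquot, ha p (hsub hp) q]
      field_simp
      ring
    rw [intervalIntegral.integral_congr hcongr] at h0
    exact h0
  -- Lipschitz continuity of A
  have hAlip : ∀ p ∈ Icc a' b', ∀ p' ∈ Icc a' b',
      |A p - A p'| ≤ (2 * M * M / (m * m)) * |p - p'| * (2 * π) := by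
    intro p hp p' hp'
    have hint1 : IntervalIntegrable (fun q => G p q 0 / fθ p q 0)
        MeasureTheory.volume 0 (2 * π) := (hIntcont p hp).intervalIntegrable _ _
    have hint2 : IntervalIntegrable (fun q => G p' q 0 / fθ p' q 0)
        MeasureTheory.volume 0 (2 * π) := (hIntcont p' hp').intervalIntegrable _ _
    have hsubint : A p - A p'
        = ∫ q in (0:ℝ)..(2*π), (G p q 0 / fθ p q 0 - G p' q 0 / fθ p' q 0) := by
      rw [intervalIntegral.integral_sub hint1 hint2]
    rw [hsubint]
    have hbound : ∀ q ∈ Set.uIoc (0 : ℝ) (2 * π),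
        ‖G p q 0 / fθ p q 0 - G p' q 0 / fθ p' q 0‖ ≤ (2 * M * M / (m * m)) * |p - p'| := by
      intro q _
      have hbp : m ≤ fθ p q 0 := hmle p hp q
      have hbp' : m ≤ fθ p' q 0 := hmle p' hp' q
      have hnep : fθ p q 0 ≠ 0 := ne_of_gt (lt_of_lt_of_le hm0 hbp)
      have hnep' : fθ p' q 0 ≠ 0 := ne_of_gt (lt_of_lt_of_le hm0 hbp')
      have hdd : G p q 0 / fθ p q 0 - G p' q 0 / fθ p' q 0
          = (G p q 0 * fθ p' q 0 - G p' q 0 * fθ p q 0) / (fθ p q 0 * fθ p' q 0) := by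
        field_simp
      rw [Real.norm_eq_abs, hdd, abs_div]
      have hnum : |G p q 0 * fθ p' q 0 - G p' q 0 * fθ p q 0| ≤ 2 * M * M * |p - p'| := by
        have hsplit : G p q 0 * fθ p' q 0 - G p' q 0 * fθ p q 0
            = (G p q 0 - G p' q 0) * fθ p' q 0 + G p' q 0 * (fθ p' q 0 - fθ p q 0) := by
          ring
        rw [hsplit]
        have h1 : |(G p q 0 - G p' q 0) * fθ p' q 0| ≤ (M * |p - p'|) * M := by
          rw [abs_mul]
          exact mul_le_mul (lipGr p hp p' hp' q) (bFϑ p' hp' q 0 (by norm_num))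
            (abs_nonneg _) (by positivity)
        have h2 : |G p' q 0 * (fθ p' q 0 - fθ p q 0)| ≤ M * (M * |p' - p|) := by
          rw [abs_mul]
          exact mul_le_mul (bG p' hp' q 0 (by norm_num)) (lipfθr p' hp' p hp q)
            (abs_nonneg _) hM0.le
        have h3 : |p' - p| = |p - p'| := abs_sub_comm _ _
        calc |(G p q 0 - G p' q 0) * fθ p' q 0 + G p' q 0 * (fθ p' q 0 - fθ p q 0)|
            ≤ |(G p q 0 - G p' q 0) * fθ p' q 0| + |G p' q 0 * (fθ p' q 0 - fθ p q 0)| :=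
              abs_add_le _ _
          _ ≤ (M * |p - p'|) * M + M * (M * |p' - p|) := add_le_add h1 h2
          _ = 2 * M * M * |p - p'| := by rw [h3]; ring
      have hden : m * m ≤ |fθ p q 0 * fθ p' q 0| := by
        rw [abs_mul]
        calc m * m ≤ fθ p q 0 * fθ p' q 0 := by nlinarith
          _ ≤ |fθ p q 0| * |fθ p' q 0| :=
            mul_le_mul (le_abs_self _) (le_abs_self _) (by nlinarith) (abs_nonneg _)
      calc |G p q 0 * fθ p' q 0 - G p' q 0 * fθ p q 0| / |fθ p q 0 * fθ p' q 0|
          ≤ (2 * M * M * |p - p'|) / (m * m) := by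
            refine div_le_div₀ (mul_nonneg (by nlinarith [hM0.le] : (0:ℝ) ≤ 2 * M * M)
              (abs_nonneg _)) hnum (mul_pos hm0 hm0) hden
        _ = (2 * M * M / (m * m)) * |p - p'| := by ring
    have := intervalIntegral.norm_integral_le_of_norm_le_const hbound
    rw [Real.norm_eq_abs] at this
    calc |∫ q in (0:ℝ)..(2*π), (G p q 0 / fθ p q 0 - G p' q 0 / fθ p' q 0)|
        ≤ (2 * M * M / (m * m)) * |p - p'| * |2 * π - 0| := this
      _ = (2 * M * M / (m * m)) * |p - p'| * (2 * π) := by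
          rw [sub_zero, abs_of_pos Real.two_pi_pos]
  have hAcont : ContinuousOn A (Icc a' b') := by
    have hK : (0 : ℝ) ≤ 2 * M * M / (m * m) * (2 * π) := by positivity
    refine LipschitzOnWith.continuousOn
      (LipschitzOnWith.of_dist_le_mul (K := Real.toNNReal (2 * M * M / (m * m) * (2 * π))) ?_)
    intro x hx y hy
    rw [Real.dist_eq, Real.dist_eq, Real.coe_toNNReal _ hK]
    calc |A x - A y| ≤ (2 * M * M / (m * m)) * |x - y| * (2 * π) := hAlip x hx y hy
      _ = 2 * M * M / (m * m) * (2 * π) * |x - y| := by ring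
  obtain ⟨pA, hpA, hpAmin⟩ := isCompact_Icc.exists_isMinOn (Set.nonempty_Icc.2 hab') hAcont
  set cA : ℝ := A pA with hcA_def
  have hcA0 : 0 < cA := hApos pA hpA
  have hcAle : ∀ p ∈ Icc a' b', cA ≤ A p := fun p hp => hpAmin hp
  -- the constants
  set Cdev : ℝ := 8 * π * M / m with hCdev_def
  have hCdev0 : 0 < Cdev := by positivity
  set K : ℝ := M + M * Cdev + M * M * (Cdev + 1) / m with hK_def
  have hK0 : 0 < K := by positivity
  set C₃ : ℝ := K * (4 * π / m) with hC₃_def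
  have hC₃0 : 0 < C₃ := by positivity
  set Istar : ℝ := min I₁ (min 1 (min (m / (2 * M)) (min ((η / 8) / Cdev) (cA / (2 * C₃)))))
    with hIstar_def
  have hIstar0 : 0 < Istar := by
    refine lt_min hI₁ (lt_min one_pos (lt_min (by positivity) (lt_min (by positivity)
      (by positivity))))
  refine ⟨Istar, hIstar0, min_le_left _ _, ?_⟩
  intro I hI0 hIle r θ hr' hθ' hr0
  -- smallness of I
  have hI1 : I ≤ 1 := hIle.trans ((min_le_right _ _).trans (min_le_left _ _))
  have hImM : I ≤ m / (2 * M) :=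
    hIle.trans ((min_le_right _ _).trans ((min_le_right _ _).trans (min_le_left _ _)))
  have hIdev' : I ≤ (η / 8) / Cdev :=
    hIle.trans ((min_le_right _ _).trans ((min_le_right _ _).trans
      ((min_le_right _ _).trans (min_le_left _ _))))
  have hIC₃ : I ≤ cA / (2 * C₃) :=
    hIle.trans ((min_le_right _ _).trans ((min_le_right _ _).trans
      ((min_le_right _ _).trans (min_le_right _ _))))
  have hIdev : Cdev * I ≤ η / 8 := by
    have := mul_le_mul_of_nonneg_left hIdev' hCdev0.le
    calc Cdev * I ≤ Cdev * ((η / 8) / Cdev) := this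
      _ = η / 8 := by rw [mul_comm, div_mul_cancel₀ _ (ne_of_gt hCdev0)]
  have habsI : |I| = I := abs_of_pos hI0
  have hfθlowI : ∀ p ∈ Icc a' b', ∀ q : ℝ, m / 2 ≤ fθ p q I :=
    fun p hp q => hfθlow p hp q I (by rw [habsI]; exact hI1) (by rw [habsI]; exact hImM)
  -- continuity of the solution and integrands
  have hrcont : ∀ s t : ℝ, 0 ≤ s → ContinuousOn r (Icc s t) :=
    fun s t hs u hu => ((hr' u (hs.trans hu.1)).continuousAt).continuousWithinAt
  have hθcont : ∀ s t : ℝ, 0 ≤ s → ContinuousOn θ (Icc s t) :=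
    fun s t hs u hu => ((hθ' u (hs.trans hu.1)).continuousAt).continuousWithinAt
  have hfrIcont : ∀ s t : ℝ, 0 ≤ s → ContinuousOn (fun u => fr (r u) (θ u) I) (Icc s t) :=
    fun s t hs => hfr.continuous.comp_continuousOn
      ((hrcont s t hs).prodMk ((hθcont s t hs).prodMk continuousOn_const))
  have hfθIcont : ∀ s t : ℝ, 0 ≤ s → ContinuousOn (fun u => fθ (r u) (θ u) I) (Icc s t) :=
    fun s t hs => hfθ.continuous.comp_continuousOn
      ((hrcont s t hs).prodMk ((hθcont s t hs).prodMk continuousOn_const))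
  have hintr : ∀ s t : ℝ, 0 ≤ s → s ≤ t →
      IntervalIntegrable (fun u => fr (r u) (θ u) I) MeasureTheory.volume s t := by
    intro s t hs hst
    refine ContinuousOn.intervalIntegrable ?_
    rw [uIcc_of_le hst]
    exact hfrIcont s t hs
  have hintθ : ∀ s t : ℝ, 0 ≤ s → s ≤ t →
      IntervalIntegrable (fun u => fθ (r u) (θ u) I) MeasureTheory.volume s t := by
    intro s t hs hst
    refine ContinuousOn.intervalIntegrable ?_
    rw [uIcc_of_le hst]
    exact hfθIcont s t hs
  have hFTCr : ∀ s t : ℝ, 0 ≤ s → s ≤ t →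
      r t - r s = ∫ u in s..t, fr (r u) (θ u) I := by
    intro s t hs hst
    refine (intervalIntegral.integral_eq_sub_of_hasDerivAt ?_ (hintr s t hs hst)).symm
    intro u hu
    rw [uIcc_of_le hst] at hu
    exact hr' u (hs.trans hu.1)
  have hFTCθ : ∀ s t : ℝ, 0 ≤ s → s ≤ t →
      θ t - θ s = ∫ u in s..t, fθ (r u) (θ u) I := by
    intro s t hs hst
    refine (intervalIntegral.integral_eq_sub_of_hasDerivAt ?_ (hintθ s t hs hst)).symm
    intro u hu
    rw [uIcc_of_le hst] at hu
    exact hθ' u (hs.trans hu.1)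
  -- speed estimates
  have S2low : ∀ s t : ℝ, 0 ≤ s → s ≤ t → (∀ u ∈ Icc s t, r u ∈ Icc a' b') →
      m / 2 * (t - s) ≤ θ t - θ s := by
    intro s t hs hst hstrip
    rw [hFTCθ s t hs hst]
    have h1 : ∫ _u in s..t, (m / 2 : ℝ) = (t - s) • (m / 2) :=
      intervalIntegral.integral_const _
    have h2 := intervalIntegral.integral_mono_on hst intervalIntegrable_const
      (hintθ s t hs hst) (fun u hu => hfθlowI (r u) (hstrip u hu) (θ u))
    rw [h1] at h2
    calc m / 2 * (t - s) = (t - s) • (m / 2) := by rw [smul_eq_mul]; ring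
      _ ≤ _ := h2
  have S2high : ∀ s t : ℝ, 0 ≤ s → s ≤ t → (∀ u ∈ Icc s t, r u ∈ Icc a' b') →
      θ t - θ s ≤ M * (t - s) := by
    intro s t hs hst hstrip
    rw [hFTCθ s t hs hst]
    have h1 : ∫ _u in s..t, (M : ℝ) = (t - s) • M := intervalIntegral.integral_const _
    have h2 := intervalIntegral.integral_mono_on hst (hintθ s t hs hst)
      intervalIntegrable_const
      (fun u hu => le_trans (le_abs_self _)
        (bFϑ (r u) (hstrip u hu) (θ u) I (by rw [habsI]; exact hI1)))
    rw [h1] at h2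
    calc (∫ u in s..t, fθ (r u) (θ u) I) ≤ (t - s) • M := h2
      _ = M * (t - s) := by rw [smul_eq_mul]; ring
  have S1 : ∀ s t : ℝ, 0 ≤ s → s ≤ t → (∀ u ∈ Icc s t, r u ∈ Icc a' b') →
      ∀ u ∈ Icc s t, |r u - r s| ≤ 2 * M * I * (u - s) := by
    intro s t hs hst hstrip u hu
    rw [hFTCr s u hs hu.1]
    have hb := intervalIntegral.norm_integral_le_of_norm_le_const
      (C := 2 * M * I) (f := fun x => fr (r x) (θ x) I) (a := s) (b := u) ?_
    · rw [Real.norm_eq_abs] at hb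
      calc |∫ x in s..u, fr (r x) (θ x) I| ≤ 2 * M * I * |u - s| := hb
        _ = 2 * M * I * (u - s) := by rw [abs_of_nonneg (by linarith [hu.1])]
    · intro x hx
      rw [uIoc_of_le hu.1] at hx
      have hxm : x ∈ Icc s t := ⟨hx.1.le, hx.2.trans hu.2⟩
      have h9 := bfr (r x) (hstrip x hxm) (θ x) I (by rw [habsI]; exact hI1)
      rw [Real.norm_eq_abs]
      calc |fr (r x) (θ x) I| ≤ 2 * M * |I| := h9
        _ = 2 * M * I := by rw [habsI]
  have Dev : ∀ s t : ℝ, 0 ≤ s → s ≤ t → (∀ u ∈ Icc s t, r u ∈ Icc a' b') →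
      θ t - θ s ≤ 2 * π → ∀ u ∈ Icc s t, |r u - r s| ≤ Cdev * I := by
    intro s t hs hst hstrip hrev u hu
    have h1 : m / 2 * (u - s) ≤ θ u - θ s :=
      S2low s u hs hu.1 (fun x hx => hstrip x ⟨hx.1, hx.2.trans hu.2⟩)
    have h2 : m / 2 * (t - u) ≤ θ t - θ u :=
      S2low u t (hs.trans hu.1) hu.2 (fun x hx => hstrip x ⟨hu.1.trans hx.1, hx.2⟩)
    have hus : u - s ≤ 4 * π / m := by
      have h5 : m / 2 * (u - s) ≤ 2 * π := by
        have h6 : 0 ≤ m / 2 * (t - u) :=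
          mul_nonneg (le_of_lt (half_pos hm0)) (sub_nonneg.2 hu.2)
        linarith
      rw [le_div_iff₀ hm0]
      linarith [h5]
    have h3 := S1 s t hs hst hstrip u hu
    calc |r u - r s| ≤ 2 * M * I * (u - s) := h3
      _ ≤ 2 * M * I * (4 * π / m) := by
          apply mul_le_mul_of_nonneg_left hus
          positivity
      _ = Cdev * I := by rw [hCdev_def]; field_simp; ring
  -- the key averaging gain over one revolution
  have Gain : ∀ s t : ℝ, 0 ≤ s → s ≤ t → (∀ u ∈ Icc s t, r u ∈ Icc a' b') →
      θ t = θ s + 2 * π → cA / 2 * I ≤ r t - r s := by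
    intro s t hs hst hstrip hrev
    have hrs : r s ∈ Icc a' b' := hstrip s ⟨le_refl _, hst⟩
    have htime : t - s ≤ 4 * π / m := by
      have h1 := S2low s t hs hst hstrip
      rw [le_div_iff₀ hm0]
      linarith [h1, hrev]
    have hdev : ∀ u ∈ Icc s t, |r u - r s| ≤ Cdev * I :=
      Dev s t hs hst hstrip (by rw [hrev]; linarith) 
    set g : ℝ → ℝ := fun x => G (r s) x 0 / fθ (r s) x 0 with hg_def
    have hgcont : Continuous g := hIntcont (r s) hrs
    have hsubst : ∫ u in s..t, fθ (r u) (θ u) I • (g ∘ θ) u = ∫ x in θ s..θ t, g x := by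
      refine intervalIntegral.integral_comp_smul_deriv ?_ ?_ hgcont
      · intro x hx
        rw [uIcc_of_le hst] at hx
        exact hθ' x (hs.trans hx.1)
      · rw [uIcc_of_le hst]
        exact hfθIcont s t hs
    have hper : Function.Periodic g (2 * π) := by
      intro x
      simp only [hg_def]
      rw [hGper (r s) x 0, hper_θ (r s) x 0]
    have hwin : ∫ x in θ s..θ t, g x = A (r s) := by
      have h1 := hper.intervalIntegral_add_eq (θ s) 0
      rw [zero_add] at h1
      rw [hrev]
      exact h1
    have hIA : I * A (r s) = ∫ u in s..t, I * (fθ (r u) (θ u) I * g (θ u)) := by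
      rw [← hwin, ← hsubst, ← intervalIntegral.integral_const_mul]
      simp only [smul_eq_mul, Function.comp_apply]
    have hint2 : IntervalIntegrable (fun u => I * (fθ (r u) (θ u) I * g (θ u)))
        MeasureTheory.volume s t := by
      refine ContinuousOn.intervalIntegrable ?_
      rw [uIcc_of_le hst]
      exact (continuousOn_const.mul ((hfθIcont s t hs).mul
        (hgcont.comp_continuousOn (hθcont s t hs))))
    have hdiff : r t - r s - I * A (r s)
        = ∫ u in s..t, (fr (r u) (θ u) I - I * (fθ (r u) (θ u) I * g (θ u))) := by
      rw [hFTCr s t hs hst, hIA, ← intervalIntegral.integral_sub (hintr s t hs hst) hint2]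
    have hptwise : ∀ u ∈ Set.uIoc s t,
        ‖fr (r u) (θ u) I - I * (fθ (r u) (θ u) I * g (θ u))‖ ≤ K * I ^ 2 := by
      intro u hu
      rw [uIoc_of_le hst] at hu
      have hum : u ∈ Icc s t := ⟨hu.1.le, hu.2⟩
      have hx : r u ∈ Icc a' b' := hstrip u hum
      have hdx : |r u - r s| ≤ Cdev * I := hdev u hum
      set q : ℝ := θ u with hq_def
      have hne0 : fθ (r s) q 0 ≠ 0 := ne_of_gt (lt_of_lt_of_le hm0 (hmle (r s) hrs q))
      have hE : fr (r u) q I - I * (fθ (r u) q I * g q)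
          = (fr (r u) q I - I * G (r u) q 0)
            + I * (G (r u) q 0 - G (r s) q 0)
            + I * (G (r s) q 0 * ((fθ (r s) q 0 - fθ (r u) q I) / fθ (r s) q 0)) := by
        simp only [hg_def]
        field_simp
        ring
      have h1 : |fr (r u) q I - I * G (r u) q 0| ≤ M * I ^ 2 :=
        taylor (r u) hx q I (by rw [habsI]; exact hI1)
      have h2 : |I * (G (r u) q 0 - G (r s) q 0)| ≤ I * (M * (Cdev * I)) := by
        rw [abs_mul, habsI]
        refine mul_le_mul_of_nonneg_left ?_ hI0.le
        calc |G (r u) q 0 - G (r s) q 0| ≤ M * |r u - r s| := lipGr (r u) hx (r s) hrs q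
          _ ≤ M * (Cdev * I) := mul_le_mul_of_nonneg_left hdx hM0.le
      have hfθd : |fθ (r s) q 0 - fθ (r u) q I| ≤ M * (Cdev + 1) * I := by
        have ha1 : |fθ (r s) q 0 - fθ (r u) q 0| ≤ M * |r s - r u| :=
          lipfθr (r s) hrs (r u) hx q
        have ha2 : |fθ (r u) q I - fθ (r u) q 0| ≤ M * |I| :=
          lipfθI (r u) hx q I (by rw [habsI]; exact hI1)
        have ha3 : |r s - r u| ≤ Cdev * I := by rw [abs_sub_comm]; exact hdx
        calc |fθ (r s) q 0 - fθ (r u) q I|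
            ≤ |fθ (r s) q 0 - fθ (r u) q 0| + |fθ (r u) q 0 - fθ (r u) q I| := by
              have := abs_add_le (fθ (r s) q 0 - fθ (r u) q 0) (fθ (r u) q 0 - fθ (r u) q I)
              simpa using this
          _ ≤ M * |r s - r u| + M * |I| := by
              refine add_le_add ha1 ?_
              rw [abs_sub_comm]; exact ha2
          _ ≤ M * (Cdev * I) + M * I := by
              rw [habsI]
              exact add_le_add (mul_le_mul_of_nonneg_left ha3 hM0.le) (le_refl _)
          _ = M * (Cdev + 1) * I := by ring
      have h3 : |I * (G (r s) q 0 * ((fθ (r s) q 0 - fθ (r u) q I) / fθ (r s) q 0))|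
          ≤ I * (M * (M * (Cdev + 1) * I / m)) := by
        rw [abs_mul, habsI]
        refine mul_le_mul_of_nonneg_left ?_ hI0.le
        rw [abs_mul]
        refine mul_le_mul (bG (r s) hrs q 0 (by norm_num)) ?_ (abs_nonneg _) hM0.le
        rw [abs_div]
        have hden : m ≤ |fθ (r s) q 0| :=
          le_trans (hmle (r s) hrs q) (le_abs_self _)
        calc |fθ (r s) q 0 - fθ (r u) q I| / |fθ (r s) q 0|
            ≤ (M * (Cdev + 1) * I) / m :=
              div_le_div₀ (by positivity) hfθd hm0 hden
          _ = M * (Cdev + 1) * I / m := rfl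
      rw [Real.norm_eq_abs, hE]
      calc |_ + _ + _| ≤ |fr (r u) q I - I * G (r u) q 0|
            + |I * (G (r u) q 0 - G (r s) q 0)|
            + |I * (G (r s) q 0 * ((fθ (r s) q 0 - fθ (r u) q I) / fθ (r s) q 0))| :=
          abs_add_three _ _ _
        _ ≤ M * I ^ 2 + I * (M * (Cdev * I)) + I * (M * (M * (Cdev + 1) * I / m)) :=
          add_le_add (add_le_add h1 h2) h3
        _ = K * I ^ 2 := by rw [hK_def]; field_simp
    have hbig : |r t - r s - I * A (r s)| ≤ C₃ * I ^ 2 := by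
      have h1 := intervalIntegral.norm_integral_le_of_norm_le_const hptwise
      rw [← hdiff, Real.norm_eq_abs] at h1
      calc |r t - r s - I * A (r s)| ≤ K * I ^ 2 * |t - s| := h1
        _ ≤ K * I ^ 2 * (4 * π / m) := by
            refine mul_le_mul_of_nonneg_left ?_ (by positivity)
            rw [abs_of_nonneg (by linarith)]
            exact htime
        _ = C₃ * I ^ 2 := by rw [hC₃_def]; ring
    have hAge : cA ≤ A (r s) := hcAle (r s) hrs
    have habs := abs_le.1 hbig
    have hC₃I : C₃ * I ≤ cA / 2 := by
      have := mul_le_mul_of_nonneg_left hIC₃ hC₃0.le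
      calc C₃ * I ≤ C₃ * (cA / (2 * C₃)) := this
        _ = cA / 2 := by field_simp
    have hfinal : I * A (r s) - C₃ * I ^ 2 ≤ r t - r s := by linarith [habs.1]
    calc cA / 2 * I = cA * I - (cA / 2) * I := by ring
      _ ≤ I * A (r s) - C₃ * I ^ 2 := by
          have h1 : cA * I ≤ I * A (r s) := by
            rw [mul_comm]
            exact mul_le_mul_of_nonneg_left hAge hI0.le
          have h2 : C₃ * I ^ 2 ≤ (cA / 2) * I := by
            calc C₃ * I ^ 2 = (C₃ * I) * I := by ring
              _ ≤ (cA / 2) * I := mul_le_mul_of_nonneg_right hC₃I hI0.le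
          linarith
      _ ≤ r t - r s := hfinal
  -- climbing over j full revolutions
  have Climb : ∀ s₀ t : ℝ, 0 ≤ s₀ → s₀ ≤ t → (∀ u ∈ Icc s₀ t, r u ∈ Icc a' b') →
      ∀ j : ℕ, θ s₀ + 2 * π * j ≤ θ t →
      ∃ s, s ∈ Icc s₀ t ∧ θ s = θ s₀ + 2 * π * j ∧ r s₀ + j * (cA / 2 * I) ≤ r s := by
    intro s₀ t h0 hst hstrip j
    induction j with
    | zero =>
      intro _
      exact ⟨s₀, ⟨le_refl _, hst⟩, by simp, by simp⟩
    | succ n ih =>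
      intro hj
      have hj' : θ s₀ + 2 * π * n ≤ θ t := by
        push_cast at hj ⊢
        linarith [hπ]
      obtain ⟨s, hsmem, hθs, hrs⟩ := ih hj'
      have hcont : ContinuousOn θ (Icc s t) := hθcont s t (h0.trans hsmem.1)
      have hmem : θ s₀ + 2 * π * (((n + 1 : ℕ) : ℝ)) ∈ Icc (θ s) (θ t) := by
        simp only [Set.mem_Icc]
        push_cast
        constructor
        · rw [hθs]; linarith [hπ]
        · push_cast at hj; linarith
      obtain ⟨s', hs'mem, hθs''⟩ := intermediate_value_Icc hsmem.2 hcont hmem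
      have hgain := Gain s s' (h0.trans hsmem.1) hs'mem.1 (fun u hu =>
        hstrip u ⟨hsmem.1.trans hu.1, hu.2.trans hs'mem.2⟩) (by
          rw [hθs'', hθs]; push_cast; ring)
      refine ⟨s', ⟨hsmem.1.trans hs'mem.1, hs'mem.2⟩, hθs'', ?_⟩
      push_cast
      push_cast at hrs
      linarith
  -- no-drop estimate
  have ND : ∀ τ : ℝ, 0 ≤ τ → (∀ u ∈ Icc 0 τ, r u ∈ Icc a' b') →
      ∀ t ∈ Icc 0 τ, r 0 - Cdev * I ≤ r t := by
    intro τ hτ hstrip t ht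
    have hstript : ∀ u ∈ Icc 0 t, r u ∈ Icc a' b' :=
      fun u hu => hstrip u ⟨hu.1, hu.2.trans ht.2⟩
    have hθmono : θ 0 ≤ θ t := by
      have h1 := S2low 0 t le_rfl ht.1 hstript
      linarith [h1, mul_nonneg (le_of_lt (half_pos hm0)) ht.1]
    set n : ℕ := (⌊(θ t - θ 0) / (2 * π)⌋).toNat with hn_def
    have hfl0 : 0 ≤ ⌊(θ t - θ 0) / (2 * π)⌋ := by
      exact Int.floor_nonneg.2 (div_nonneg (by linarith) Real.two_pi_pos.le)
    have hncast : ((n : ℤ) : ℝ) = ((⌊(θ t - θ 0) / (2 * π)⌋ : ℤ) : ℝ) := by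
      rw [hn_def, Int.toNat_of_nonneg hfl0]
    have hn1 : θ 0 + 2 * π * n ≤ θ t := by
      have h1 := Int.floor_le ((θ t - θ 0) / (2 * π))
      have h2 := mul_le_mul_of_nonneg_right h1 Real.two_pi_pos.le
      rw [div_mul_cancel₀ _ (ne_of_gt Real.two_pi_pos)] at h2
      have h3 : ((n : ℝ)) = ((⌊(θ t - θ 0) / (2 * π)⌋ : ℤ) : ℝ) := by
        exact_mod_cast hncast
      rw [h3]
      linarith
    have hn2 : θ t - θ 0 < 2 * π * (n + 1) := by
      have h1 := Int.lt_floor_add_one ((θ t - θ 0) / (2 * π))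
      have h2 := mul_lt_mul_of_pos_right h1 Real.two_pi_pos
      rw [div_mul_cancel₀ _ (ne_of_gt Real.two_pi_pos)] at h2
      have h3 : ((n : ℝ)) = ((⌊(θ t - θ 0) / (2 * π)⌋ : ℤ) : ℝ) := by
        exact_mod_cast hncast
      rw [h3]
      linarith [h2]
    obtain ⟨s, hsmem, hθs, hrs⟩ := Climb 0 t le_rfl ht.1 hstript n hn1
    have hrev2 : θ t - θ s ≤ 2 * π := by
      rw [hθs]
      linarith [hn2]
    have hdev := Dev s t hsmem.1 hsmem.2
      (fun u hu => hstript u ⟨hsmem.1.trans hu.1, hu.2⟩)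
      hrev2 t ⟨hsmem.2, le_refl _⟩
    have habs := abs_le.1 hdev
    have hterm : 0 ≤ (n : ℝ) * (cA / 2 * I) := by positivity
    linarith [habs.1]
  -- bootstrap: upper bound implies full strip bound
  have Boot : ∀ T : ℝ, 0 ≤ T → (∀ u ∈ Icc 0 T, r u ≤ b') →
      ∀ u ∈ Icc 0 T, r u ∈ Icc a' b' := by
    intro T hT hub
    by_contra hcon
    push_neg at hcon
    obtain ⟨u, hu, hnot⟩ := hcon
    have hlow : r u < a' := by
      by_contra h
      push_neg at h
      exact hnot ⟨h, hub u hu⟩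
    have hr0a : a' < r 0 := by
      have h1 := hr0.1
      simp only [ha'_def]
      linarith
    obtain ⟨t₁, ht₁mem, ht₁⟩ := intermediate_value_Icc' hu.1 (hrcont 0 u le_rfl)
      ⟨hlow.le, hr0a.le⟩
    have hcl : IsClosed (Icc 0 u ∩ r ⁻¹' {a'}) :=
      (hrcont 0 u le_rfl).preimage_isClosed_of_isClosed isClosed_Icc isClosed_singleton
    have hSne : (Icc 0 u ∩ r ⁻¹' {a'}).Nonempty := ⟨t₁, ht₁mem, ht₁⟩
    have hSbdd : BddBelow (Icc 0 u ∩ r ⁻¹' {a'}) :=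
      BddBelow.mono Set.inter_subset_left bddBelow_Icc
    set τ : ℝ := sInf (Icc 0 u ∩ r ⁻¹' {a'}) with hτ_def
    have hτS : τ ∈ Icc 0 u ∩ r ⁻¹' {a'} := hcl.csInf_mem hSne hSbdd
    have hτmem : τ ∈ Icc 0 u := hτS.1
    have hτval : r τ = a' := hτS.2
    have hmin : ∀ x ∈ Icc 0 u ∩ r ⁻¹' {a'}, τ ≤ x := fun x hx => csInf_le hSbdd hx
    have hstripτ : ∀ x ∈ Icc 0 τ, r x ∈ Icc a' b' := by
      intro x hx
      have hxT : x ∈ Icc 0 T := ⟨hx.1, hx.2.trans (hτmem.2.trans hu.2)⟩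
      refine ⟨?_, hub x hxT⟩
      by_contra hlt
      push_neg at hlt
      obtain ⟨t₂, ht₂mem, ht₂⟩ := intermediate_value_Icc' hx.1 (hrcont 0 x le_rfl)
        ⟨hlt.le, hr0a.le⟩
      have hτt₂ : τ ≤ t₂ :=
        hmin t₂ ⟨⟨ht₂mem.1, ht₂mem.2.trans (hx.2.trans hτmem.2)⟩, ht₂⟩
      have hxt₂ : x = t₂ := le_antisymm (hx.2.trans hτt₂) ht₂mem.2
      rw [hxt₂, ht₂] at hlt
      exact lt_irrefl _ hlt
    have hND := ND τ hτmem.1 hstripτ τ ⟨hτmem.1, le_refl _⟩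
    rw [hτval] at hND
    simp only [ha'_def] at hND
    have h1 := hr0.1
    linarith
  -- injectivity of θ on good intervals
  -- case split on whether we start at the boundary
  by_cases hinit : r 0 = b'
  · refine ⟨0, le_refl _, ?_, hinit, ?_, ?_⟩
    · intro t ht
      have ht0 : t = 0 := le_antisymm ht.2 ht.1
      rw [ht0, hinit]
      exact ⟨by linarith, by linarith⟩
    · intro t ht
      refine ⟨1, one_pos, ?_⟩
      intro s hs _
      have hs0 : s = 0 := le_antisymm hs.1.2 hs.1.1
      have ht0 : t = 0 := le_antisymm ht.1.2 ht.1.1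
      rw [hs0, ht0]
    · intro x hx y hy hxy
      have hx0 : x = 0 := le_antisymm hx.1.2 hx.1.1
      have hy0 : y = 0 := le_antisymm hy.1.2 hy.1.1
      rw [hx0, hy0] at hxy
      exact absurd hxy (lt_irrefl _)
  · have hr0lt : r 0 < b' := lt_of_le_of_ne hr0.2 hinit
    -- the solution must reach b'
    have hSrne : ∃ t : ℝ, 0 ≤ t ∧ r t = b' := by
      by_contra hcon
      push_neg at hcon
      have hlt : ∀ t : ℝ, 0 ≤ t → r t < b' := by
        intro t ht
        rcases lt_trichotomy (r t) b' with h | h | h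
        · exact h
        · exact absurd h (hcon t ht)
        · obtain ⟨t₂, ht₂mem, ht₂⟩ := intermediate_value_Icc ht (hrcont 0 t le_rfl)
            ⟨hr0lt.le, h.le⟩
          exact absurd ht₂ (hcon t₂ ht₂mem.1)
      have hstripAll : ∀ T : ℝ, 0 ≤ T → ∀ u ∈ Icc 0 T, r u ∈ Icc a' b' :=
        fun T hT => Boot T hT (fun u hu => (hlt u hu.1).le)
      obtain ⟨N, hN⟩ := exists_nat_gt ((b' - r 0) / (cA / 2 * I))
      set T : ℝ := 4 * π * N / m with hT_def
      have hT0 : (0 : ℝ) ≤ T := by positivity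
      have hθT : θ 0 + 2 * π * N ≤ θ T := by
        have h1 := S2low 0 T le_rfl hT0 (hstripAll T hT0)
        have h2 : m / 2 * (T - 0) = 2 * π * N := by
          rw [hT_def]
          field_simp
          ring
        linarith
      obtain ⟨s, hsmem, hθs, hrs⟩ := Climb 0 T le_rfl hT0 (hstripAll T hT0) N hθT
      have hrsb : r s < b' := hlt s hsmem.1
      have hcI : 0 < cA / 2 * I := mul_pos (half_pos hcA0) hI0
      have hprod : b' - r 0 < N * (cA / 2 * I) := by
        have h2 := (div_lt_iff₀ hcI).1 hN
        linarith
      linarith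
    obtain ⟨t₀, ht₀0, ht₀⟩ := hSrne
    have hclb : IsClosed (Icc 0 t₀ ∩ r ⁻¹' {b'}) :=
      (hrcont 0 t₀ le_rfl).preimage_isClosed_of_isClosed isClosed_Icc isClosed_singleton
    have hSbne : (Icc 0 t₀ ∩ r ⁻¹' {b'}).Nonempty := ⟨t₀, ⟨ht₀0, le_refl _⟩, ht₀⟩
    have hSbdd : BddBelow (Icc 0 t₀ ∩ r ⁻¹' {b'}) :=
      BddBelow.mono Set.inter_subset_left bddBelow_Icc
    set tbar : ℝ := sInf (Icc 0 t₀ ∩ r ⁻¹' {b'}) with htbar_def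
    have htbarS : tbar ∈ Icc 0 t₀ ∩ r ⁻¹' {b'} := hclb.csInf_mem hSbne hSbdd
    have htbar0 : 0 ≤ tbar := htbarS.1.1
    have htbarval : r tbar = b' := htbarS.2
    have hminb : ∀ x ∈ Icc 0 t₀ ∩ r ⁻¹' {b'}, tbar ≤ x := fun x hx => csInf_le hSbdd hx
    have hub2 : ∀ x ∈ Icc 0 tbar, r x ≤ b' := by
      intro x hx
      by_contra hgt
      push_neg at hgt
      obtain ⟨t₂, ht₂mem, ht₂⟩ := intermediate_value_Icc hx.1 (hrcont 0 x le_rfl)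
        ⟨hr0lt.le, hgt.le⟩
      have ht₂Sr : t₂ ∈ Icc 0 t₀ ∩ r ⁻¹' {b'} :=
        ⟨⟨ht₂mem.1, ht₂mem.2.trans (hx.2.trans htbarS.1.2)⟩, ht₂⟩
      have h1 := hminb t₂ ht₂Sr
      have hxeq : x = t₂ := le_antisymm (hx.2.trans h1) ht₂mem.2
      rw [hxeq, ht₂] at hgt
      exact lt_irrefl _ hgt
    have hstripbar : ∀ u ∈ Icc 0 tbar, r u ∈ Icc a' b' := Boot tbar htbar0 hub2
    have hND2 : ∀ t ∈ Icc 0 tbar, r 0 - Cdev * I ≤ r t := ND tbar htbar0 hstripbar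
    have hinj : ∀ x ∈ Icc 0 tbar, ∀ y ∈ Icc 0 tbar, x < y → θ x < θ y := by
      intro x hx y hy hxy
      have h1 := S2low x y hx.1 hxy.le
        (fun u hu => hstripbar u ⟨hx.1.trans hu.1, hu.2.trans hy.2⟩)
      have h2 : 0 < m / 2 * (y - x) := mul_pos (half_pos hm0) (sub_pos.2 hxy)
      linarith
    refine ⟨tbar, htbar0, ?_, htbarval, ?_, ?_⟩
    · intro t ht
      have h1 := hND2 t ht
      have h2 := hub2 t ht
      have h3 := hr0.1
      exact ⟨by linarith [hIdev], by linarith⟩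
    · -- discreteness of the crossing times
      intro t ht
      refine ⟨2 * π / M, by positivity, ?_⟩
      intro s hs hd
      obtain ⟨htmem, kt, hkt⟩ := ht
      obtain ⟨hsmem, ks, hks⟩ := hs
      have hbndθ : |θ s - θ t| ≤ M * |s - t| := by
        rcases le_total s t with h | h
        · have h1 := S2high s t hsmem.1 h
            (fun u hu => hstripbar u ⟨hsmem.1.trans hu.1, hu.2.trans htmem.2⟩)
          have h2 := S2low s t hsmem.1 h
            (fun u hu => hstripbar u ⟨hsmem.1.trans hu.1, hu.2.trans htmem.2⟩)
          have h3 : 0 ≤ m / 2 * (t - s) := mul_nonneg (half_pos hm0).le (by linarith)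
          rw [abs_sub_comm, abs_of_nonneg (by linarith), abs_sub_comm,
            abs_of_nonneg (by linarith)]
          linarith
        · have h1 := S2high t s htmem.1 h
            (fun u hu => hstripbar u ⟨htmem.1.trans hu.1, hu.2.trans hsmem.2⟩)
          have h2 := S2low t s htmem.1 h
            (fun u hu => hstripbar u ⟨htmem.1.trans hu.1, hu.2.trans hsmem.2⟩)
          have h3 : 0 ≤ m / 2 * (s - t) := mul_nonneg (half_pos hm0).le (by linarith)
          rw [abs_of_nonneg (by linarith), abs_of_nonneg (by linarith)]
          linarith
      have hθd : |θ s - θ t| < 2 * π := by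
        have h4 : M * |s - t| < M * (2 * π / M) :=
          mul_lt_mul_of_pos_left hd hM0
        have h5 : M * (2 * π / M) = 2 * π := by field_simp
        linarith
      have hkk : ks = kt := by
        rw [hks, hkt, ← mul_sub, abs_mul, abs_of_pos Real.two_pi_pos] at hθd
        have h6 : |(ks : ℝ) - kt| < 1 := by
          nlinarith [abs_nonneg ((ks : ℝ) - kt), Real.two_pi_pos]
        have h7 : |ks - kt| < 1 := by
          have : ((|ks - kt| : ℤ) : ℝ) < 1 := by push_cast; exact h6
          exact_mod_cast this
        rw [abs_lt] at h7
        omega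
      have hθeq : θ s = θ t := by rw [hks, hkt, hkk]
      rcases lt_trichotomy s t with h | h | h
      · exact absurd (hinj s hsmem t htmem h) (by rw [hθeq]; exact lt_irrefl _)
      · exact h
      · exact absurd (hinj t htmem s hsmem h) (by rw [hθeq]; exact lt_irrefl _)
    · -- strict monotonicity at crossings
      intro x hx y hy hxy
      obtain ⟨hxmem, kx, hkx⟩ := hx
      obtain ⟨hymem, ky, hky⟩ := hy
      have hθlt : θ x < θ y := hinj x hxmem y hymem hxy
      have hkxy : kx < ky := by
        rw [hkx, hky] at hθlt
        have := lt_of_mul_lt_mul_left (by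
          calc (2 * π) * (kx : ℝ) = 2 * π * kx := by ring
            _ < 2 * π * ky := hθlt
            _ = (2 * π) * (ky : ℝ) := by ring) Real.two_pi_pos.le
        exact_mod_cast this
      set d : ℕ := (ky - kx).toNat with hdd_def
      have hd1 : 1 ≤ (ky - kx) := by omega
      have hdcast : ((d : ℝ)) = (ky : ℝ) - kx := by
        have h8 : ((ky - kx).toNat : ℤ) = ky - kx := Int.toNat_of_nonneg (by omega)
        have h9 : ((d : ℤ) : ℝ) = ((ky - kx : ℤ) : ℝ) := by exact_mod_cast h8
        push_cast at h9
        push_cast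
        linarith
      have hθyval : θ y = θ x + 2 * π * d := by
        rw [hkx, hky, hdcast]
        ring
      obtain ⟨s', hs'mem, hθs', hrs'⟩ := Climb x y hxmem.1 hxy.le
        (fun u hu => hstripbar u ⟨hxmem.1.trans hu.1, hu.2.trans hymem.2⟩) d
        (le_of_eq hθyval.symm)
      have hs'bar : s' ∈ Icc 0 tbar :=
        ⟨hxmem.1.trans hs'mem.1, hs'mem.2.trans hymem.2⟩
      have hs'y : s' = y := by
        rcases lt_trichotomy s' y with h | h | h
        · have h10 := hinj s' hs'bar y hymem h
          rw [hθs', ← hθyval] at h10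
          exact absurd h10 (lt_irrefl _)
        · exact h
        · have h10 := hinj y hymem s' hs'bar h
          rw [hθs', ← hθyval] at h10
          exact absurd h10 (lt_irrefl _)
      rw [hs'y] at hrs'
      have hdpos : (0 : ℝ) < d := by
        have : (1 : ℕ) ≤ d := by omega
        exact_mod_cast Nat.lt_of_lt_of_le Nat.zero_lt_one this
      have hgain : 0 < (d : ℝ) * (cA / 2 * I) :=
        mul_pos hdpos (mul_pos (half_pos hcA0) hI0)
      linarith

/-- Lemma 3 (averaging lemma) in `(r,θ)` coordinates: if the radial drift
vanishes at `I = 0`, the angular velocity is positive at `I = 0`,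
`∂_r (f_r/f_θ)|_{I=0} = 0`, and the averaged first-order radial drift
`∫₀^{2π} ∂_I (f_r/f_θ)|_{I=0} dθ` is positive, then for sufficiently small
`I > 0` (resp. `I < 0`) every solution started with `r(0) ∈ [r₁,r₂]` reaches
`r = r₂` (resp. `r = r₁`), staying in `(r₁−η, r₂+η)`, with strictly
increasing (resp. decreasing) radii at its isolated crossings of `θ ∈ 2πℤ`. -/
theorem stmt9 (r₁ r₂ η I₁ : ℝ) (hr : r₁ < r₂) (hη : 0 < η) (hI₁ : 0 < I₁)
    (fr fθ : ℝ → ℝ → ℝ → ℝ)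
    (hfr : ContDiff ℝ 2 (fun z : ℝ × ℝ × ℝ => fr z.1 z.2.1 z.2.2))
    (hfθ : ContDiff ℝ 2 (fun z : ℝ × ℝ × ℝ => fθ z.1 z.2.1 z.2.2))
    (hper_r : ∀ r θ I : ℝ, fr r (θ + 2 * Real.pi) I = fr r θ I)
    (hper_θ : ∀ r θ I : ℝ, fθ r (θ + 2 * Real.pi) I = fθ r θ I)
    (ha : ∀ r ∈ Set.Ioo (r₁ - η) (r₂ + η), ∀ θ : ℝ, fr r θ 0 = 0)
    (hb : ∀ r ∈ Set.Ioo (r₁ - η) (r₂ + η), ∀ θ : ℝ, 0 < fθ r θ 0)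
    (hc : ∀ r ∈ Set.Ioo (r₁ - η) (r₂ + η), ∀ θ : ℝ,
      deriv (fun r' => fr r' θ 0 / fθ r' θ 0) r = 0)
    (hd : ∀ r ∈ Set.Ioo (r₁ - η) (r₂ + η),
      0 < ∫ θ in (0 : ℝ)..(2 * Real.pi),
        deriv (fun I => fr r θ I / fθ r θ I) 0) :
    ∃ Istar : ℝ, 0 < Istar ∧ Istar ≤ I₁ ∧
      (∀ I : ℝ, 0 < I → I ≤ Istar →
        ∀ r θ : ℝ → ℝ,
          (∀ t : ℝ, 0 ≤ t → HasDerivAt r (fr (r t) (θ t) I) t) →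
          (∀ t : ℝ, 0 ≤ t → HasDerivAt θ (fθ (r t) (θ t) I) t) →
          r 0 ∈ Set.Icc r₁ r₂ →
          ∃ tbar : ℝ, 0 ≤ tbar ∧
            (∀ t ∈ Set.Icc 0 tbar, r t ∈ Set.Ioo (r₁ - η) (r₂ + η)) ∧
            r tbar = r₂ ∧
            (let P : Set ℝ :=
              {t | t ∈ Set.Icc 0 tbar ∧ ∃ k : ℤ, θ t = 2 * Real.pi * k}
             (∀ t ∈ P, ∃ δ > 0, ∀ s ∈ P, |s - t| < δ → s = t) ∧
             StrictMonoOn r P)) ∧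
      (∀ I : ℝ, -Istar ≤ I → I < 0 →
        ∀ r θ : ℝ → ℝ,
          (∀ t : ℝ, 0 ≤ t → HasDerivAt r (fr (r t) (θ t) I) t) →
          (∀ t : ℝ, 0 ≤ t → HasDerivAt θ (fθ (r t) (θ t) I) t) →
          r 0 ∈ Set.Icc r₁ r₂ →
          ∃ tbar : ℝ, 0 ≤ tbar ∧
            (∀ t ∈ Set.Icc 0 tbar, r t ∈ Set.Ioo (r₁ - η) (r₂ + η)) ∧
            r tbar = r₁ ∧
            (let P : Set ℝ :=
              {t | t ∈ Set.Icc 0 tbar ∧ ∃ k : ℤ, θ t = 2 * Real.pi * k}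
             (∀ t ∈ P, ∃ δ > 0, ∀ s ∈ P, |s - t| < δ → s = t) ∧
             StrictAntiOn r P)) := by
  obtain ⟨J₁, hJ₁0, hJ₁le, hA⟩ :=
    stmt9_pos r₁ r₂ η I₁ hr hη hI₁ fr fθ hfr hfθ hper_r hper_θ ha hb hd
  set c : ℝ := r₁ + r₂ with hc_def
  set Fr : ℝ → ℝ → ℝ → ℝ := fun ρ' θ' J' => -fr (c - ρ') θ' (-J') with hFr_def
  set Fθ : ℝ → ℝ → ℝ → ℝ := fun ρ' θ' J' => fθ (c - ρ') θ' (-J') with hFθ_def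
  have hL : ContDiff ℝ 2 (fun z : ℝ × ℝ × ℝ => ((c - z.1, z.2.1, -z.2.2) : ℝ × ℝ × ℝ)) := by
    exact (contDiff_const.sub contDiff_fst).prodMk
      ((contDiff_snd.fst).prodMk (contDiff_snd.snd.neg))
  have hFr : ContDiff ℝ 2 (fun z : ℝ × ℝ × ℝ => Fr z.1 z.2.1 z.2.2) := by
    have := (hfr.comp hL).neg
    exact this
  have hFθ : ContDiff ℝ 2 (fun z : ℝ × ℝ × ℝ => Fθ z.1 z.2.1 z.2.2) := by
    have := hfθ.comp hL
    exact this
  have hmem : ∀ ρ ∈ Set.Ioo (r₁ - η) (r₂ + η), c - ρ ∈ Set.Ioo (r₁ - η) (r₂ + η) := by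
    rintro ρ ⟨h1, h2⟩
    exact ⟨by simp only [hc_def]; linarith, by simp only [hc_def]; linarith⟩
  have hd' : ∀ ρ ∈ Set.Ioo (r₁ - η) (r₂ + η),
      0 < ∫ θ in (0 : ℝ)..(2 * Real.pi),
        deriv (fun J => Fr ρ θ J / Fθ ρ θ J) 0 := by
    intro ρ hρ
    have h1 : ∀ θ : ℝ, deriv (fun J => Fr ρ θ J / Fθ ρ θ J) 0
        = deriv (fun I => fr (c - ρ) θ I / fθ (c - ρ) θ I) 0 := by
      intro θ
      have he : (fun J => Fr ρ θ J / Fθ ρ θ J)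
          = fun J => -((fun I => fr (c - ρ) θ I / fθ (c - ρ) θ I) (-J)) := by
        funext J
        simp only [hFr_def, hFθ_def, neg_div]
      have h2 := deriv_comp_neg (f := fun I => fr (c - ρ) θ I / fθ (c - ρ) θ I) (x := (0 : ℝ))
      simp only [neg_zero] at h2
      rw [he, deriv.fun_neg]
      beta_reduce
      rw [h2, neg_neg]
    rw [intervalIntegral.integral_congr (fun θ _ => h1 θ)]
    exact hd (c - ρ) (hmem ρ hρ)
  obtain ⟨J₂, hJ₂0, hJ₂le, hB⟩ :=
    stmt9_pos r₁ r₂ η I₁ hr hη hI₁ Fr Fθ hFr hFθ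
      (fun ρ' θ' J' => by simp only [hFr_def, hper_r])
      (fun ρ' θ' J' => by simp only [hFθ_def, hper_θ])
      (fun ρ' hρ' θ' => by
        simp only [hFr_def, neg_zero, neg_eq_zero]
        exact ha (c - ρ') (hmem ρ' hρ') θ')
      (fun ρ' hρ' θ' => by
        simp only [hFθ_def, neg_zero]
        exact hb (c - ρ') (hmem ρ' hρ') θ')
      hd'
  refine ⟨min J₁ J₂, lt_min hJ₁0 hJ₂0, (min_le_left _ _).trans hJ₁le, ?_, ?_⟩
  · intro I hI0 hIle r θ hr' hθ' hr0
    exact hA I hI0 (hIle.trans (min_le_left _ _)) r θ hr' hθ' hr0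
  · intro I hIle hI0 r θ hr' hθ' hr0
    set J : ℝ := -I with hJ_def
    have hJ0 : 0 < J := by simp only [hJ_def]; linarith
    have hJle : J ≤ J₂ := by
      have : -(min J₁ J₂) ≤ I := hIle
      have h2 : min J₁ J₂ ≤ J₂ := min_le_right _ _
      simp only [hJ_def]; linarith
    set ρ : ℝ → ℝ := fun t => c - r t with hρ_def
    have hρ' : ∀ t : ℝ, 0 ≤ t → HasDerivAt ρ (Fr (ρ t) (θ t) J) t := by
      intro t ht
      have h1 := (hr' t ht).const_sub c
      have h2 : Fr (ρ t) (θ t) J = -fr (r t) (θ t) I := by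
        simp only [hFr_def, hρ_def, hJ_def, neg_neg, sub_sub_cancel]
      rw [h2]
      exact h1
    have hθ'' : ∀ t : ℝ, 0 ≤ t → HasDerivAt θ (Fθ (ρ t) (θ t) J) t := by
      intro t ht
      have h2 : Fθ (ρ t) (θ t) J = fθ (r t) (θ t) I := by
        simp only [hFθ_def, hρ_def, hJ_def, neg_neg, sub_sub_cancel]
      rw [h2]
      exact hθ' t ht
    have hρ0 : ρ 0 ∈ Set.Icc r₁ r₂ := by
      obtain ⟨h1, h2⟩ := hr0
      exact ⟨by simp only [hρ_def, hc_def]; linarith, by simp only [hρ_def, hc_def]; linarith⟩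
    obtain ⟨tbar, htbar0, hstrip, hend, hP⟩ := hB J hJ0 hJle ρ θ hρ' hθ'' hρ0
    refine ⟨tbar, htbar0, ?_, ?_, ?_⟩
    · intro t ht
      obtain ⟨h1, h2⟩ := hstrip t ht
      simp only [hρ_def] at h1 h2
      exact ⟨by simp only [hc_def] at h1 h2 ⊢; linarith, by simp only [hc_def] at h1 h2 ⊢; linarith⟩
    · simp only [hρ_def, hc_def] at hend ⊢; linarith
    · obtain ⟨hdisc, hmono⟩ := hP
      refine ⟨hdisc, ?_⟩
      intro s hs t ht hst
      have := hmono hs ht hst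
      simp only [hρ_def] at this
      linarith
end

section
/- Let m, l, g > 0 and define E(q_u, p_u) := p_u²/(10 m l²) + 3 m g l (1 − cos q_u). For every (q_u, p_u) ∈ (−π, π) × ℝ with (q_u, p_u) ≠ (0, 0) and E(q_u, p_u) < 6 m g l, there exists a unique pair (r, θ) ∈ (0, π) × [0, 2π) such that q_u = r·cos θ and p_u = −sgn(sin θ)·√(30 m² g l³ (cos(r cos θ) − cos r)); moreover, this r equals arccos(cos q_u − p_u²/(30 m² g l³)). -/
open Real

set_option maxHeartbeats 800000

private lemma aux_cos_one (θ : ℝ) (h0 : 0 ≤ θ) (h2 : θ < 2 * Real.pi)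
    (hc : Real.cos θ = 1) : θ = 0 := by
  have hπ := Real.pi_pos
  exact (Real.cos_eq_one_iff_of_lt_of_lt (by linarith) h2).mp hc

private lemma aux_cos_negone (θ : ℝ) (h0 : 0 ≤ θ) (h2 : θ < 2 * Real.pi)
    (hc : Real.cos θ = -1) : θ = Real.pi := by
  have hπ := Real.pi_pos
  have h1 : Real.cos (θ - Real.pi) = 1 := by
    rw [show θ - Real.pi = -(Real.pi - θ) by ring, Real.cos_neg, Real.cos_pi_sub, hc]; ring
  have := (Real.cos_eq_one_iff_of_lt_of_lt (by linarith) (by linarith)).mp h1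
  linarith

private lemma aux_eq_arccos_of_sin_pos (θ : ℝ) (h0 : 0 ≤ θ) (h2 : θ < 2 * Real.pi)
    (hs : 0 < Real.sin θ) : θ = Real.arccos (Real.cos θ) := by
  have hπ := Real.pi_pos
  have hle : θ ≤ Real.pi := by
    by_contra h
    push_neg at h
    have h1 : 0 ≤ Real.sin (θ - Real.pi) :=
      Real.sin_nonneg_of_nonneg_of_le_pi (by linarith) (by linarith)
    have h2' : Real.sin (θ - Real.pi) = -Real.sin θ := by
      rw [show θ - Real.pi = -(Real.pi - θ) by ring, Real.sin_neg, Real.sin_pi_sub]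
    rw [h2'] at h1
    linarith
  exact (Real.arccos_cos h0 hle).symm

private lemma aux_eq_arccos_of_sin_neg (θ : ℝ) (h0 : 0 ≤ θ) (h2 : θ < 2 * Real.pi)
    (hs : Real.sin θ < 0) : θ = 2 * Real.pi - Real.arccos (Real.cos θ) := by
  have hπ := Real.pi_pos
  have hgt : Real.pi < θ := by
    by_contra h
    push_neg at h
    linarith [Real.sin_nonneg_of_nonneg_of_le_pi h0 h]
  have hc : Real.cos (2 * Real.pi - θ) = Real.cos θ := Real.cos_two_pi_sub θ
  have h := Real.arccos_cos (by linarith : (0:ℝ) ≤ 2 * Real.pi - θ) (by linarith)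
  rw [hc] at h
  linarith

/-- Bijectivity of the oscillation-region coordinate transformation (55):
every `(q_u,p_u) ≠ (0,0)` with `q_u ∈ (−π,π)` and `E(q_u,p_u) < 6mgl`
corresponds to a unique `(r,θ) ∈ (0,π) × [0,2π)` with `q_u = r cos θ` and
`p_u = −sgn(sin θ)·√(30m²gl³(cos(r cos θ) − cos r))`; moreover this `r` is
`arccos(cos q_u − p_u²/(30m²gl³))`. -/
theorem stmt15 (m l g : ℝ) (hm : 0 < m) (hl : 0 < l) (hg : 0 < g)
    (E : ℝ → ℝ → ℝ)
    (hE : ∀ qu pu : ℝ, E qu pu = pu ^ 2 / (10 * m * l ^ 2)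
      + 3 * m * g * l * (1 - Real.cos qu))
    (qu pu : ℝ) (hqu : qu ∈ Set.Ioo (-Real.pi) Real.pi)
    (hne : (qu, pu) ≠ (0, 0)) (hElt : E qu pu < 6 * m * g * l) :
    (∃! rθ : ℝ × ℝ,
      rθ.1 ∈ Set.Ioo 0 Real.pi ∧ rθ.2 ∈ Set.Ico 0 (2 * Real.pi) ∧
      qu = rθ.1 * Real.cos rθ.2 ∧
      pu = -Real.sign (Real.sin rθ.2) *
        Real.sqrt (30 * m ^ 2 * g * l ^ 3 *
          (Real.cos (rθ.1 * Real.cos rθ.2) - Real.cos rθ.1))) ∧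
    (∀ rθ : ℝ × ℝ,
      rθ.1 ∈ Set.Ioo 0 Real.pi → rθ.2 ∈ Set.Ico 0 (2 * Real.pi) →
      qu = rθ.1 * Real.cos rθ.2 →
      pu = -Real.sign (Real.sin rθ.2) *
        Real.sqrt (30 * m ^ 2 * g * l ^ 3 *
          (Real.cos (rθ.1 * Real.cos rθ.2) - Real.cos rθ.1)) →
      rθ.1 = Real.arccos (Real.cos qu - pu ^ 2 / (30 * m ^ 2 * g * l ^ 3))) := by
  obtain ⟨hq1, hq2⟩ := hqu
  have hπ := Real.pi_pos
  have hC : (0:ℝ) < 30 * m ^ 2 * g * l ^ 3 := by positivity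
  set C := 30 * m ^ 2 * g * l ^ 3 with hCdef
  have h10 : (0:ℝ) < 10 * m * l ^ 2 := by positivity
  have hEh := hElt
  rw [hE qu pu] at hEh
  have hkey : pu ^ 2 < C * (1 + Real.cos qu) := by
    have h1 : pu ^ 2 / (10 * m * l ^ 2) < 3 * m * g * l * (1 + Real.cos qu) := by linarith
    have h2 := (div_lt_iff₀ h10).mp h1
    have h3 : C * (1 + Real.cos qu) = 3 * m * g * l * (1 + Real.cos qu) * (10 * m * l ^ 2) := by
      rw [hCdef]; ring
    linarith
  set x := Real.cos qu - pu ^ 2 / C with hxdef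
  have hpuC : 0 ≤ pu ^ 2 / C := by positivity
  have hx1 : -1 < x := by
    have : pu ^ 2 / C < 1 + Real.cos qu := (div_lt_iff₀ hC).mpr (by linarith)
    rw [hxdef]; linarith
  have hxle : x ≤ Real.cos qu := by rw [hxdef]; linarith
  have hx2 : x < 1 := by
    rcases eq_or_ne pu 0 with hp0 | hp0
    · have hq0 : qu ≠ 0 := by
        intro h; exact hne (by simp [h, hp0])
      have hcle := Real.cos_le_one qu
      have hcne : Real.cos qu ≠ 1 := fun h =>
        hq0 ((Real.cos_eq_one_iff_of_lt_of_lt (by linarith) (by linarith)).mp h)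
      have : Real.cos qu < 1 := lt_of_le_of_ne hcle hcne
      calc x ≤ Real.cos qu := hxle
        _ < 1 := this
    · have hpos : 0 < pu ^ 2 / C := by positivity
      have := Real.cos_le_one qu
      rw [hxdef]; linarith
  set r0 := Real.arccos x with hr0def
  have hxmem1 : -1 ≤ x := le_of_lt hx1
  have hxmem2 : x ≤ 1 := le_of_lt hx2
  have hcosr0 : Real.cos r0 = x := Real.cos_arccos hxmem1 hxmem2
  have hr0pos : 0 < r0 := Real.arccos_pos.mpr hx2
  have hr0lt : r0 < Real.pi := by
    rcases lt_or_eq_of_le (Real.arccos_le_pi x) with h | h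
    · exact h
    · exfalso
      have hpi : r0 = Real.pi := h
      rw [hpi, Real.cos_pi] at hcosr0
      linarith
  have habs : |qu| < Real.pi := abs_lt.mpr ⟨hq1, hq2⟩
  have hqu_le : |qu| ≤ r0 := by
    by_contra h
    push_neg at h
    have := Real.cos_lt_cos_of_nonneg_of_le_pi (le_of_lt hr0pos) (le_of_lt habs) h
    rw [Real.cos_abs] at this
    linarith
  have hqu_lt : pu ≠ 0 → |qu| < r0 := by
    intro hp
    have hxlt : x < Real.cos qu := by
      have : 0 < pu ^ 2 / C := by positivity
      rw [hxdef]; linarith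
    rcases lt_or_eq_of_le hqu_le with h | h
    · exact h
    · exfalso
      rw [← h, Real.cos_abs] at hcosr0
      linarith
  have hCq : C * (Real.cos qu - Real.cos r0) = pu ^ 2 := by
    rw [hcosr0, hxdef]
    field_simp
    ring
  have hr0abs : pu = 0 → r0 = |qu| := by
    intro hp0
    rw [hr0def, hxdef, hp0]
    norm_num
    rw [← Real.cos_abs, Real.arccos_cos (abs_nonneg qu) habs.le]
  -- uniqueness of r
  have hR : ∀ rθ : ℝ × ℝ,
      rθ.1 ∈ Set.Ioo 0 Real.pi → rθ.2 ∈ Set.Ico 0 (2 * Real.pi) →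
      qu = rθ.1 * Real.cos rθ.2 →
      pu = -Real.sign (Real.sin rθ.2) *
        Real.sqrt (C * (Real.cos (rθ.1 * Real.cos rθ.2) - Real.cos rθ.1)) →
      rθ.1 = r0 := by
    rintro ⟨r, θ⟩ ⟨hr1, hr2⟩ hθm hq hp
    simp only at hr1 hr2 hq hp ⊢
    have hrabs : |qu| ≤ r := by
      rw [hq, abs_mul]
      calc |r| * |Real.cos θ| ≤ |r| * 1 :=
            mul_le_mul_of_nonneg_left (Real.abs_cos_le_one θ) (abs_nonneg r)
        _ = r := by rw [mul_one, abs_of_pos hr1]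
    have hcosr_le : Real.cos r ≤ Real.cos qu := by
      have := Real.cos_le_cos_of_nonneg_of_le_pi (abs_nonneg qu) (le_of_lt hr2) hrabs
      rwa [Real.cos_abs] at this
    have hcq : Real.cos (r * Real.cos θ) = Real.cos qu := by rw [← hq]
    rw [hcq] at hp
    have hsnn : 0 ≤ C * (Real.cos qu - Real.cos r) :=
      mul_nonneg hC.le (sub_nonneg.mpr hcosr_le)
    have key : pu ^ 2 = C * (Real.cos qu - Real.cos r) → r = r0 := by
      intro hsq2
      have hcr : Real.cos r = x := by
        rw [hxdef]
        have : pu ^ 2 / C = Real.cos qu - Real.cos r := by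
          rw [hsq2]; field_simp
        linarith
      rw [hr0def, ← hcr, Real.arccos_cos (le_of_lt hr1) (le_of_lt hr2)]
    rcases lt_trichotomy (Real.sin θ) 0 with hs | hs | hs
    · rw [Real.sign_of_neg hs] at hp
      apply key
      rw [hp]
      rw [show (-(-1) * Real.sqrt (C * (Real.cos qu - Real.cos r))) ^ 2
          = Real.sqrt (C * (Real.cos qu - Real.cos r)) ^ 2 by ring]
      exact Real.sq_sqrt hsnn
    · -- sin θ = 0
      rw [hs, Real.sign_zero] at hp
      have hp0 : pu = 0 := by rw [hp]; ring
      have hcossq : Real.cos θ = 1 ∨ Real.cos θ = -1 := by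
        have h1 := Real.sin_sq_add_cos_sq θ
        rw [hs] at h1
        have : (Real.cos θ - 1) * (Real.cos θ + 1) = 0 := by linear_combination h1
        rcases mul_eq_zero.mp this with h | h
        · left; linarith
        · right; linarith
      have hr_eq : r = |qu| := by
        rcases hcossq with h | h
        · rw [hq, h, mul_one]; exact (abs_of_pos hr1).symm
        · rw [hq, h, mul_neg_one, abs_neg, abs_of_pos hr1]
      rw [hr_eq, hr0abs hp0]
    · rw [Real.sign_of_pos hs] at hp
      apply key
      rw [hp]
      rw [show (-1 * Real.sqrt (C * (Real.cos qu - Real.cos r))) ^ 2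
          = Real.sqrt (C * (Real.cos qu - Real.cos r)) ^ 2 by ring]
      exact Real.sq_sqrt hsnn
  have hc1 : -1 ≤ qu / r0 := by
    rw [le_div_iff₀ hr0pos]
    have := (abs_le.mp hqu_le).1
    linarith
  have hc2 : qu / r0 ≤ 1 := by
    rw [div_le_one hr0pos]
    exact (abs_le.mp hqu_le).2
  set θ0 := if 0 < pu then 2 * Real.pi - Real.arccos (qu / r0) else Real.arccos (qu / r0)
    with hθ0def
  have hcosθ0 : Real.cos θ0 = qu / r0 := by
    rw [hθ0def]
    split_ifs
    · rw [Real.cos_two_pi_sub, Real.cos_arccos hc1 hc2]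
    · rw [Real.cos_arccos hc1 hc2]
  have hq0 : qu = r0 * Real.cos θ0 := by
    rw [hcosθ0]
    field_simp
  have hsqrt_abs : Real.sqrt (C * (Real.cos qu - Real.cos r0)) = |pu| := by
    rw [hCq, Real.sqrt_sq_eq_abs]
  have hθ0mem : θ0 ∈ Set.Ico 0 (2 * Real.pi) := by
    rw [hθ0def]
    split_ifs with hpu
    · have hlt : |qu| < r0 := hqu_lt (by linarith)
      have hclt : qu / r0 < 1 := by
        rw [div_lt_one hr0pos]
        calc qu ≤ |qu| := le_abs_self qu
          _ < r0 := hlt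
      have harc : 0 < Real.arccos (qu / r0) := Real.arccos_pos.mpr hclt
      have := Real.arccos_le_pi (qu / r0)
      constructor <;> [linarith; linarith]
    · have h1 := Real.arccos_nonneg (qu / r0)
      have h2 := Real.arccos_le_pi (qu / r0)
      constructor <;> [linarith; linarith]
  have hp0goal : pu = -Real.sign (Real.sin θ0) *
      Real.sqrt (C * (Real.cos (r0 * Real.cos θ0) - Real.cos r0)) := by
    rw [← hq0, hsqrt_abs]
    rcases lt_trichotomy pu 0 with hpu | hpu | hpu
    · have hθ0 : θ0 = Real.arccos (qu / r0) := by rw [hθ0def]; simp [not_lt.mpr (le_of_lt hpu)]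
      have hlt : |qu| < r0 := hqu_lt (ne_of_lt hpu)
      have hclt : qu / r0 < 1 := by
        rw [div_lt_one hr0pos]; calc qu ≤ |qu| := le_abs_self qu
          _ < r0 := hlt
      have hcgt : -1 < qu / r0 := by
        rw [lt_div_iff₀ hr0pos]
        have : -qu ≤ |qu| := neg_le_abs qu
        linarith
      have hsin : 0 < Real.sin θ0 := by
        rw [hθ0, Real.sin_arccos]
        apply Real.sqrt_pos.mpr
        nlinarith
      rw [Real.sign_of_pos hsin, abs_of_neg hpu]
      ring
    · rw [hpu]
      simp
    · have hθ0 : θ0 = 2 * Real.pi - Real.arccos (qu / r0) := by rw [hθ0def]; simp [hpu]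
      have hlt : |qu| < r0 := hqu_lt (ne_of_gt hpu)
      have hclt : qu / r0 < 1 := by
        rw [div_lt_one hr0pos]; calc qu ≤ |qu| := le_abs_self qu
          _ < r0 := hlt
      have hcgt : -1 < qu / r0 := by
        rw [lt_div_iff₀ hr0pos]
        have : -qu ≤ |qu| := neg_le_abs qu
        linarith
      have hsin : Real.sin θ0 < 0 := by
        rw [hθ0, Real.sin_two_pi_sub, Real.sin_arccos, neg_lt_zero]
        apply Real.sqrt_pos.mpr
        nlinarith
      rw [Real.sign_of_neg hsin, abs_of_pos hpu]
      ring
  constructor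
  · refine ⟨(r0, θ0), ⟨⟨hr0pos, hr0lt⟩, hθ0mem, hq0, hp0goal⟩, ?_⟩
    rintro ⟨r, θ⟩ ⟨hrm, hθm, hq, hp⟩
    simp only at hrm hθm hq hp
    have hreq : r = r0 := hR (r, θ) hrm hθm hq hp
    subst hreq
    have hcosθ : Real.cos θ = qu / r0 := by
      rw [eq_div_iff (ne_of_gt hr0pos), hq]
      ring
    have hcq : Real.cos (r0 * Real.cos θ) = Real.cos qu := by rw [← hq]
    rw [hcq, hsqrt_abs] at hp
    have hθeq : θ = θ0 := by
      rcases lt_trichotomy pu 0 with hpu | hpu | hpu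
      · have hθ0e : θ0 = Real.arccos (qu / r0) := by
          rw [hθ0def]; simp [not_lt.mpr (le_of_lt hpu)]
        rw [abs_of_neg hpu] at hp
        have hsign : Real.sign (Real.sin θ) = 1 := by
          rcases lt_trichotomy (Real.sin θ) 0 with hs | hs | hs
          · rw [Real.sign_of_neg hs] at hp; linarith
          · rw [hs, Real.sign_zero] at hp; simp at hp; linarith
          · exact Real.sign_of_pos hs
        have hsin : 0 < Real.sin θ := by
          rcases lt_trichotomy (Real.sin θ) 0 with hs | hs | hs
          · rw [Real.sign_of_neg hs] at hsign; norm_num at hsign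
          · rw [hs, Real.sign_zero] at hsign; norm_num at hsign
          · exact hs
        rw [hθ0e, ← hcosθ]
        exact aux_eq_arccos_of_sin_pos θ hθm.1 hθm.2 hsin
      · have hq0' : qu ≠ 0 := by
          intro h; exact hne (by simp [h, hpu])
        have hr0a : r0 = |qu| := hr0abs hpu
        rcases lt_trichotomy qu 0 with hqlt | hqeq | hqgt
        · have hcm1 : Real.cos θ = -1 := by
            rw [hcosθ, hr0a, abs_of_neg hqlt]
            field_simp
          have hθpi : θ = Real.pi := aux_cos_negone θ hθm.1 hθm.2 hcm1
          have hθ0pi : θ0 = Real.pi := by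
            rw [hθ0def]
            simp only [hpu, lt_irrefl, if_false]
            rw [hr0a, abs_of_neg hqlt]
            rw [show qu / -qu = -1 by field_simp]
            exact Real.arccos_neg_one
          rw [hθpi, hθ0pi]
        · exact absurd hqeq hq0'
        · have hcm1 : Real.cos θ = 1 := by
            rw [hcosθ, hr0a, abs_of_pos hqgt]
            field_simp
          have hθ0' : θ = 0 := aux_cos_one θ hθm.1 hθm.2 hcm1
          have hθ00 : θ0 = 0 := by
            rw [hθ0def]
            simp only [hpu, lt_irrefl, if_false]
            rw [hr0a, abs_of_pos hqgt]
            rw [show qu / qu = 1 by field_simp]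
            exact Real.arccos_one
          rw [hθ0', hθ00]
      · have hθ0e : θ0 = 2 * Real.pi - Real.arccos (qu / r0) := by
          rw [hθ0def]; simp [hpu]
        rw [abs_of_pos hpu] at hp
        have hsin : Real.sin θ < 0 := by
          rcases lt_trichotomy (Real.sin θ) 0 with hs | hs | hs
          · exact hs
          · rw [hs, Real.sign_zero] at hp; simp at hp; linarith
          · rw [Real.sign_of_pos hs] at hp; linarith
        rw [hθ0e, ← hcosθ]
        exact aux_eq_arccos_of_sin_neg θ hθm.1 hθm.2 hsin
    exact Prod.ext rfl hθeq
  · intro rθ h1 h2 h3 h4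
    exact hR rθ h1 h2 h3 h4
end
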